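/- arXiv:2512.13210 — 5 statements merged into one kernel-verified Lean document; each statement's English description precedes it below -/
import Mathlib

section
/- Let G be a graph, S ⊆ V(G), and F a family of connected graphs. If the induced subgraph G[S] is F-minor-free, then every minimum-size vertex set Y such that G \ Y is F-minor-free contains at most |N(S)| vertices of S (where N(S) is the open neighborhood of S in G). -/
open SimpleGraph Set

def IsMinorModel {α β : Type*} (G : SimpleGraph α) (H : SimpleGraph β)
    (φ : β → Set α) : Prop :=
  (∀ w, (φ w).Nonempty) ∧
  (∀ w, (G.induce (φ w)).Connected) ∧
  (∀ w w', w ≠ w' → Disjoint (φ w) (φ w')) ∧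
  (∀ w w', H.Adj w w' → ∃ a ∈ φ w, ∃ b ∈ φ w', G.Adj a b)

def IsMinor {α β : Type*} (H : SimpleGraph β) (G : SimpleGraph α) : Prop :=
  ∃ φ, IsMinorModel G H φ

/-- `G` has no member of the family `F` as a minor. -/
def FMinorFree {α ι : Type*} {Fv : ι → Type*} (F : ∀ i, SimpleGraph (Fv i))
    (G : SimpleGraph α) : Prop := ∀ i, ¬ IsMinor (F i) G

/-!
Replace `Y` by `Y' = (Y \ S) ∪ N(S)`. In `G \ Y'` no edge leaves `S`, so each connected branch
set of a minor model lies inside `S` or outside `S`, and since the members of `F` are connected,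
all branch sets lie on the same side. A model inside `S` is a minor of `G[S]`; a model outside
`S` avoids `Y`, so it is a minor of `G \ Y`. Hence `Y'` is a deletion set as well, and
minimality of `Y` gives `|Y| ≤ |Y \ S| + |N(S)|`.
-/

namespace SimpleGraph

variable {α : Type*} {G : SimpleGraph α}

noncomputable def induceInduceIso (G : SimpleGraph α) (A : Set α) (s : Set A) :
    (G.induce A).induce s ≃g G.induce (Subtype.val '' s) where
  toEquiv := Equiv.Set.image Subtype.val s Subtype.val_injective
  map_rel_iff' := Iff.rfl

lemma Reachable.iff_of_adj {p : α → Prop} (hp : ∀ a b, G.Adj a b → p a → p b) {a b : α}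
    (hab : G.Reachable a b) : p a ↔ p b := by
  obtain ⟨w⟩ := hab
  induction w with
  | nil => rfl
  | cons hadj _ ih =>
    exact ⟨fun ha => ih.mp (hp _ _ hadj ha), fun hb => hp _ _ hadj.symm (ih.mpr hb)⟩

lemma subset_or_subset_compl_of_induce_connected {C T : Set α} (hC : (G.induce C).Connected)
    (hcut : ∀ u ∈ C, ∀ v ∈ C, G.Adj u v → u ∈ T → v ∈ T) : C ⊆ T ∨ C ⊆ Tᶜ := by
  by_cases hCT : ∃ x ∈ C, x ∈ T
  · obtain ⟨x, hxC, hxT⟩ := hCT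
    refine Or.inl fun y hyC => ?_
    have hstep : ∀ a b : C, (G.induce C).Adj a b → (a : α) ∈ T → (b : α) ∈ T :=
      fun a b hab => hcut a a.2 b b.2 hab
    exact ((hC.preconnected ⟨x, hxC⟩ ⟨y, hyC⟩).iff_of_adj hstep).mp hxT
  · push Not at hCT
    exact Or.inr hCT

end SimpleGraph

section Minor

variable {α β : Type*} {G : SimpleGraph α} {H : SimpleGraph β}

lemma isMinor_induce_iff {A : Set α} :
    IsMinor H (G.induce A) ↔ ∃ φ, IsMinorModel G H φ ∧ ∀ w, φ w ⊆ A := by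
  constructor
  · rintro ⟨φ, hne, hconn, hdisj, hadj⟩
    refine ⟨fun w => Subtype.val '' φ w, ⟨fun w => (hne w).image _,
      fun w => (induceInduceIso G A (φ w)).connected_iff.mp (hconn w),
      fun w w' hww => disjoint_image_of_injective Subtype.val_injective (hdisj w w' hww),
      fun w w' h => ?_⟩,
      fun w => Subtype.coe_image_subset A (φ w)⟩
    obtain ⟨a, ha, b, hb, hab⟩ := hadj w w' h
    exact ⟨a, ⟨a, ha, rfl⟩, b, ⟨b, hb, rfl⟩, hab⟩
  · rintro ⟨φ, ⟨hne, hconn, hdisj, hadj⟩, hA⟩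
    have himage : ∀ w, Subtype.val '' (Subtype.val ⁻¹' φ w : Set A) = φ w := fun w => by
      rw [Subtype.image_preimage_coe, Set.inter_eq_right.mpr (hA w)]
    refine ⟨fun w => Subtype.val ⁻¹' φ w, fun w => ?_, fun w => ?_,
      fun w w' hww => (hdisj w w' hww).preimage _, fun w w' h => ?_⟩
    · obtain ⟨x, hx⟩ := hne w
      exact ⟨⟨x, hA w hx⟩, hx⟩
    · exact (induceInduceIso G A _).connected_iff.mpr (himage w ▸ hconn w)
    · obtain ⟨a, ha, b, hb, hab⟩ := hadj w w' h
      exact ⟨⟨a, hA w ha⟩, ha, ⟨b, hA w' hb⟩, hb, hab⟩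

lemma IsMinor.induce_mono {A B : Set α} (h : IsMinor H (G.induce A)) (hAB : A ⊆ B) :
    IsMinor H (G.induce B) := by
  obtain ⟨φ, hφ, hA⟩ := isMinor_induce_iff.mp h
  exact isMinor_induce_iff.mpr ⟨φ, hφ, fun w => (hA w).trans hAB⟩

lemma IsMinorModel.forall_subset_or_forall_subset_compl {φ : β → Set α} {A T : Set α}
    (hH : H.Connected) (hφ : IsMinorModel G H φ) (hA : ∀ w, φ w ⊆ A)
    (hcut : ∀ u ∈ A, ∀ v ∈ A, G.Adj u v → u ∈ T → v ∈ T) :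
    (∀ w, φ w ⊆ T) ∨ (∀ w, φ w ⊆ Tᶜ) := by
  obtain ⟨-, hconn, -, hadj⟩ := hφ
  have hside : ∀ w, φ w ⊆ T ∨ φ w ⊆ Tᶜ := fun w =>
    subset_or_subset_compl_of_induce_connected (hconn w)
      fun u hu v hv => hcut u (hA w hu) v (hA w hv)
  have hstep : ∀ w w', H.Adj w w' → φ w ⊆ T → φ w' ⊆ T := by
    intro w w' hww' hwT
    obtain ⟨a, ha, b, hb, hab⟩ := hadj w w' hww'
    have hbT : b ∈ T := hcut a (hA w ha) b (hA w' hb) hab (hwT ha)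
    exact (hside w').resolve_right fun h => h hb hbT
  obtain ⟨w₀⟩ := hH.nonempty
  by_cases hw₀ : φ w₀ ⊆ T
  · exact Or.inl fun w => ((hH.preconnected w₀ w).iff_of_adj hstep).mp hw₀
  · exact Or.inr fun w =>
      (hside w).resolve_left fun hw => hw₀ (((hH.preconnected w₀ w).iff_of_adj hstep).mpr hw)

lemma IsMinor.induce_inter_or_induce_diff {A T : Set α} (hH : H.Connected)
    (h : IsMinor H (G.induce A)) (hcut : ∀ u ∈ A, ∀ v ∈ A, G.Adj u v → u ∈ T → v ∈ T) :
    IsMinor H (G.induce (A ∩ T)) ∨ IsMinor H (G.induce (A \ T)) := by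
  obtain ⟨φ, hφ, hA⟩ := isMinor_induce_iff.mp h
  rcases hφ.forall_subset_or_forall_subset_compl hH hA hcut with hT | hT
  · exact Or.inl (isMinor_induce_iff.mpr ⟨φ, hφ, fun w => Set.subset_inter (hA w) (hT w)⟩)
  · exact Or.inr (isMinor_induce_iff.mpr ⟨φ, hφ, fun w => Set.subset_inter (hA w) (hT w)⟩)

lemma fMinorFree_induce_compl_sdiff_union [DecidableEq α] {ι : Type*} {Fv : ι → Type*}
    {F : ∀ i, SimpleGraph (Fv i)} (hF : ∀ i, (F i).Connected)
    {S Y N : Finset α} (hS : FMinorFree F (G.induce (↑S : Set α)))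
    (hY : FMinorFree F (G.induce ((↑Y : Set α)ᶜ)))
    (hN : ∀ u ∈ S, ∀ v, G.Adj u v → v ∉ S → v ∈ N) :
    FMinorFree F (G.induce ((↑(Y \ S ∪ N) : Set α)ᶜ)) := by
  intro i hi
  have hcut : ∀ u ∈ (↑(Y \ S ∪ N) : Set α)ᶜ, ∀ v ∈ (↑(Y \ S ∪ N) : Set α)ᶜ,
      G.Adj u v → u ∈ (↑S : Set α) → v ∈ (↑S : Set α) := by
    intro u _ v hv huv hu
    by_contra hvS
    exact hv (by simp [hN u hu v huv hvS])
  rcases hi.induce_inter_or_induce_diff (hF i) hcut with hin | hout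
  · exact hS i (hin.induce_mono Set.inter_subset_right)
  · refine hY i (hout.induce_mono fun x hx hxY => hx.1 ?_)
    simp [hxY, hx.2]

end Minor

/-- if `G[S]` is `F`-minor-free (for a family `F` of connected graphs),
then every minimum-size `F`-minor deletion set `Y` of `G` has at most `|N(S)|`
vertices in `S`, where `N(S)` is the open neighborhood of `S`. -/
theorem stmt0 {V ι : Type} [Fintype V] [DecidableEq V] {Fv : ι → Type}
    (G : SimpleGraph V) (S : Finset V)
    (F : ∀ i, SimpleGraph (Fv i)) (hFconn : ∀ i, (F i).Connected)
    (hS : FMinorFree F (G.induce (↑S : Set V)))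
    (Y : Finset V)
    (hY : FMinorFree F (G.induce ((↑Y : Set V)ᶜ)))
    (hmin : ∀ Y' : Finset V, FMinorFree F (G.induce ((↑Y' : Set V)ᶜ)) → Y.card ≤ Y'.card) :
    (Y ∩ S).card ≤ {v : V | v ∉ S ∧ ∃ u ∈ S, G.Adj u v}.ncard := by
  set N := {v : V | v ∉ S ∧ ∃ u ∈ S, G.Adj u v}
  have hN : N.Finite := N.toFinite
  have hfree : FMinorFree F (G.induce ((↑(Y \ S ∪ hN.toFinset) : Set V)ᶜ)) :=
    fMinorFree_induce_compl_sdiff_union hFconn hS hY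
      fun u hu v huv hv => hN.mem_toFinset.mpr ⟨hv, u, hu, huv⟩
  have hY_le : Y.card ≤ (Y \ S).card + N.ncard := by
    calc Y.card ≤ (Y \ S ∪ hN.toFinset).card := hmin _ hfree
      _ ≤ (Y \ S).card + hN.toFinset.card := Finset.card_union_le _ _
      _ = (Y \ S).card + N.ncard := by rw [Set.ncard_eq_toFinset_card N hN]
  have hsplit := Finset.card_inter_add_card_sdiff Y S
  omega
end

section
/- Let φ be a minor model of a graph H in a graph G. Then for every biconnected component B_H of H, there exists a biconnected component B_G of G such that the graph H[B_H] is a minor of the subgraph of G induced by φ(B_H) ∩ B_G, where φ(B_H) denotes the union of branch sets of vertices in B_H. -/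
open SimpleGraph Set

def IsBiconnected {α : Type*} (G : SimpleGraph α) : Prop :=
  G.Connected ∧ ∀ v : α, (G.induce {u | u ≠ v}).Connected

/-- A biconnected component: a maximal vertex set inducing a biconnected subgraph. -/
def IsBiconnectedComponent {α : Type*} (G : SimpleGraph α) (B : Set α) : Prop :=
  IsBiconnected (G.induce B) ∧
  ∀ B' : Set α, B ⊆ B' → IsBiconnected (G.induce B') → B' = B

/-!
Let `U` be the union of the branch sets and call `u ∈ U` a core vertex if, for every other
`v ∈ U`, some branch set avoiding `v` is reachable from `u` in `G[U - v]`. Two branch sets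
avoiding `v` are joined in `G[U - v]` through the branch sets of `H - w₀` (where `v ∈ φ w₀`),
because `H` is biconnected; hence two core vertices stay connected after deleting any vertex,
so the core is biconnected and extends to a biconnected component by Zorn's lemma.
On a path between core vertices every vertex `z` is again a core vertex, since for `v ≠ z` one
of the two subpaths from `z` to an end avoids `v`. So each branch set meets the core in a
connected set, and the endpoints of the edges realizing `H` are core vertices.
-/

namespace SimpleGraph

variable {V : Type*} {G : SimpleGraph V}

def ReachableIn (G : SimpleGraph V) (s : Set V) (a b : V) : Prop :=
  ∃ p : G.Walk a b, ∀ x ∈ p.support, x ∈ s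

namespace ReachableIn

variable {s t : Set V} {a b c : V}

lemma refl (ha : a ∈ s) : G.ReachableIn s a a := ⟨.nil, by simpa⟩

lemma of_adj (h : G.Adj a b) (ha : a ∈ s) (hb : b ∈ s) : G.ReachableIn s a b :=
  ⟨.cons h .nil, by simp [ha, hb]⟩

lemma symm (h : G.ReachableIn s a b) : G.ReachableIn s b a := by
  obtain ⟨p, hp⟩ := h
  exact ⟨p.reverse, by simpa using hp⟩

lemma trans (hab : G.ReachableIn s a b) (hbc : G.ReachableIn s b c) : G.ReachableIn s a c := by
  obtain ⟨p, hp⟩ := hab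
  obtain ⟨q, hq⟩ := hbc
  refine ⟨p.append q, fun x hx => ?_⟩
  rcases (Walk.mem_support_append_iff _ _).1 hx with hx | hx
  exacts [hp x hx, hq x hx]

lemma mono (hst : s ⊆ t) (h : G.ReachableIn s a b) : G.ReachableIn t a b := by
  obtain ⟨p, hp⟩ := h
  exact ⟨p, fun x hx => hst (hp x hx)⟩

end ReachableIn

lemma Preconnected.reachableIn {s : Set V} (hs : (G.induce s).Preconnected) {a b : V}
    (ha : a ∈ s) (hb : b ∈ s) : G.ReachableIn s a b := by
  obtain ⟨p⟩ := hs ⟨a, ha⟩ ⟨b, hb⟩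
  have hp : ∀ x ∈ (p.map (Embedding.induce s).toHom).support, x ∈ s := by
    simp only [Walk.support_map, List.mem_map]
    rintro _ ⟨y, -, rfl⟩
    exact y.2
  exact ⟨_, hp⟩

lemma connected_induce_of_reachableIn {s : Set V} (hne : s.Nonempty)
    (h : ∀ a ∈ s, ∀ b ∈ s, G.ReachableIn s a b) : (G.induce s).Connected := by
  have := hne.to_subtype
  refine ⟨fun a b => ?_⟩
  obtain ⟨p, hp⟩ := h a a.2 b b.2
  exact ⟨p.induce s hp⟩

lemma connected_induce_induce_iff {T : Set V} {t : Set T} :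
    ((G.induce T).induce t).Connected ↔ (G.induce (Subtype.val '' t)).Connected := by
  let f := (Embedding.induce T).comp (Embedding.induce (G := G.induce T) t)
  have hrange : Set.range f = Subtype.val '' t := by
    ext x
    constructor
    · rintro ⟨y, rfl⟩
      exact ⟨y.1, y.2, rfl⟩
    · rintro ⟨y, hy, rfl⟩
      exact ⟨⟨y, hy⟩, rfl⟩
  rw [f.isoInduceRange.connected_iff, hrange]

lemma Walk.IsPath.reachableIn_diff_start_or_end {a b : V} {p : G.Walk a b} (hp : p.IsPath)
    {s : Set V} (hps : ∀ x ∈ p.support, x ∈ s) {z v : V} (hz : z ∈ p.support) (hzv : z ≠ v) :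
    G.ReachableIn (s \ {v}) z a ∨ G.ReachableIn (s \ {v}) z b := by
  classical
  set q := p.takeUntil z hz
  set r := p.dropUntil z hz
  have hnodup : (q.support ++ r.support.tail).Nodup := by
    rw [← Walk.support_append, p.take_spec hz]
    exact hp.support_nodup
  by_cases hvq : v ∈ q.support
  · right
    refine ⟨r, fun x hx => ⟨hps x (p.support_dropUntil_subset_support hz hx), ?_⟩⟩
    rintro rfl
    rw [← r.cons_tail_support] at hx
    rcases List.mem_cons.1 hx with rfl | hx
    · exact hzv rfl
    · exact List.disjoint_of_nodup_append hnodup hvq hx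
  · left
    refine ⟨q.reverse, fun x hx => ?_⟩
    rw [Walk.support_reverse, List.mem_reverse] at hx
    exact ⟨hps x (p.support_takeUntil_subset_support hz hx), by rintro rfl; exact hvq hx⟩

end SimpleGraph

section Biconnected

variable {V : Type*} {G : SimpleGraph V}

lemma isBiconnected_induce_iff {B : Set V} :
    IsBiconnected (G.induce B) ↔
      (G.induce B).Connected ∧ ∀ x ∈ B, (G.induce (B \ {x})).Connected := by
  have himage (x : B) : Subtype.val '' {u : B | u ≠ x} = B \ {x.1} := by
    ext y
    simp [Subtype.ext_iff, and_comm]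
  refine and_congr_right' ⟨fun h x hx => ?_, fun h x => ?_⟩
  · rw [← himage ⟨x, hx⟩, ← connected_induce_induce_iff]
    exact h ⟨x, hx⟩
  · rw [connected_induce_induce_iff, himage]
    exact h x x.2

lemma connected_induce_sUnion_of_isChain {c : Set (Set V)} (hne : c.Nonempty)
    (hchain : IsChain (· ⊆ ·) c) (hc : ∀ C ∈ c, (G.induce C).Connected) :
    (G.induce (⋃₀ c)).Connected := by
  refine induce_sUnion_connected_of_pairwise_not_disjoint hne (fun {s t} hs ht => ?_) (hc _ ·)
  rcases hchain.total hs ht with hst | hts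
  · rw [inter_eq_left.2 hst]
    exact nonempty_coe_sort.1 (hc s hs).nonempty
  · rw [inter_eq_right.2 hts]
    exact nonempty_coe_sort.1 (hc t ht).nonempty

lemma isBiconnected_induce_sUnion_of_isChain {c : Set (Set V)} (hne : c.Nonempty)
    (hchain : IsChain (· ⊆ ·) c) (hc : ∀ C ∈ c, IsBiconnected (G.induce C)) :
    IsBiconnected (G.induce (⋃₀ c)) := by
  simp only [isBiconnected_induce_iff] at hc ⊢
  refine ⟨connected_induce_sUnion_of_isChain hne hchain fun C hC => (hc C hC).1, fun x _ => ?_⟩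
  have hdiff : ⋃₀ c \ {x} = ⋃₀ ((· \ {x}) '' c) := by
    ext y
    simp only [mem_sdiff, mem_sUnion, sUnion_image, mem_iUnion, exists_prop]
    tauto
  rw [hdiff]
  refine connected_induce_sUnion_of_isChain (hne.image _)
    (hchain.image_of_map_rel _ _ _ fun _ _ h => sdiff_subset_sdiff_left h) ?_
  rintro _ ⟨C, hC, rfl⟩
  by_cases hxC : x ∈ C
  · exact (hc C hC).2 x hxC
  · dsimp only
    rw [sdiff_singleton_eq_self hxC]
    exact (hc C hC).1

lemma exists_isBiconnectedComponent_superset {B : Set V} (hB : IsBiconnected (G.induce B)) :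
    ∃ C, B ⊆ C ∧ IsBiconnectedComponent G C := by
  obtain ⟨C, hBC, hC⟩ := zorn_subset_nonempty {C | IsBiconnected (G.induce C)}
    (fun c hc hchain hne => ⟨⋃₀ c, isBiconnected_induce_sUnion_of_isChain hne hchain hc,
      fun _ => subset_sUnion_of_mem⟩) B hB
  exact ⟨C, hBC, hC.prop, fun C' hCC' hC' => (hC.eq_of_subset hC' hCC').symm⟩

lemma IsBiconnected.exists_adj (hG : IsBiconnected G) (v : V) : ∃ w, G.Adj v w := by
  obtain ⟨⟨u, hu⟩⟩ := (hG.2 v).nonempty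
  obtain ⟨p⟩ := hG.1 v u
  cases p with
  | nil => exact absurd rfl hu
  | cons h _ => exact ⟨_, h⟩

end Biconnected

namespace IsMinorModel

variable {V ι : Type*} {G : SimpleGraph V} {H : SimpleGraph ι} {φ : ι → Set V}

lemma induce (hφ : IsMinorModel G H φ) (s : Set ι) :
    IsMinorModel G (H.induce s) (fun w => φ w) :=
  ⟨fun w => hφ.1 w, fun w => hφ.2.1 w,
    fun w w' h => hφ.2.2.1 w w' (Subtype.coe_ne_coe.2 h), fun w w' h => hφ.2.2.2 w w' h⟩

lemma isMinor_induce (hφ : IsMinorModel G H φ) {T : Set V} (hT : ∀ w, φ w ⊆ T) :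
    IsMinor H (G.induce T) := by
  obtain ⟨hne, hconn, hdisj, hadj⟩ := hφ
  refine ⟨fun w => Subtype.val ⁻¹' φ w, fun w => ?_, fun w => ?_,
    fun w w' h => (hdisj w w' h).preimage _, fun w w' h => ?_⟩
  · obtain ⟨a, ha⟩ := hne w
    exact ⟨⟨a, hT w ha⟩, ha⟩
  · rw [connected_induce_induce_iff, Subtype.image_preimage_coe, inter_eq_right.2 (hT w)]
    exact hconn w
  · obtain ⟨a, ha, b, hb, hab⟩ := hadj w w' h
    exact ⟨⟨a, hT w ha⟩, ha, ⟨b, hT w' hb⟩, hb, hab⟩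

lemma reachableIn_biUnion (hφ : IsMinorModel G H φ) {s : Set ι} {w w' : ι}
    (h : H.ReachableIn s w w') {a b : V} (ha : a ∈ φ w) (hb : b ∈ φ w') :
    G.ReachableIn (⋃ x ∈ s, φ x) a b := by
  obtain ⟨p, hp⟩ := h
  induction p generalizing a with
  | nil =>
    exact ((hφ.2.1 _).preconnected.reachableIn ha hb).mono
      (subset_biUnion_of_mem (hp _ (by simp)))
  | @cons u x _ hux p ih =>
    obtain ⟨a', ha', c, hc, hac⟩ := hφ.2.2.2 u x hux
    have hu : u ∈ s := hp u (by simp)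
    have hx : x ∈ s := hp x (by simp)
    exact (((hφ.2.1 _).preconnected.reachableIn ha ha').mono (subset_biUnion_of_mem hu)).trans
      ((ReachableIn.of_adj hac (mem_biUnion hu ha') (mem_biUnion hx hc)).trans
        (ih hc hb fun y hy => hp y (by simp [hy])))

lemma reachableIn_iUnion (hφ : IsMinorModel G H φ) (hH : H.Preconnected) {w w' : ι} {a b : V}
    (ha : a ∈ φ w) (hb : b ∈ φ w') : G.ReachableIn (⋃ x, φ x) a b := by
  obtain ⟨p⟩ := hH w w'
  simpa only [biUnion_univ] using hφ.reachableIn_biUnion (s := univ) ⟨p, fun _ _ => trivial⟩ ha hb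

end IsMinorModel

section ModelCore

variable {V ι : Type*} (G : SimpleGraph V) (φ : ι → Set V)

def ReachesBranchAvoiding (v u : V) : Prop :=
  ∃ w, v ∉ φ w ∧ ∃ b ∈ φ w, G.ReachableIn ((⋃ w, φ w) \ {v}) u b

def modelCore : Set V :=
  {u | u ∈ ⋃ w, φ w ∧ ∀ v ∈ ⋃ w, φ w, v ≠ u → ReachesBranchAvoiding G φ v u}

variable {G φ}

lemma ReachesBranchAvoiding.of_reachableIn {v u u' : V}
    (h : G.ReachableIn ((⋃ w, φ w) \ {v}) u u') (h' : ReachesBranchAvoiding G φ v u') :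
    ReachesBranchAvoiding G φ v u := by
  obtain ⟨w, hvw, b, hb, hu'b⟩ := h'
  exact ⟨w, hvw, b, hb, h.trans hu'b⟩

lemma mem_modelCore_of_isPath {a b : V} {p : G.Walk a b} (hp : p.IsPath)
    (hpU : ∀ x ∈ p.support, x ∈ ⋃ w, φ w) (ha : a ∈ modelCore G φ) (hb : b ∈ modelCore G φ)
    {z : V} (hz : z ∈ p.support) : z ∈ modelCore G φ := by
  refine ⟨hpU z hz, fun v hv hvz => ?_⟩
  rcases hp.reachableIn_diff_start_or_end hpU hz hvz.symm with h | h
  · obtain ⟨q, hq⟩ := h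
    exact .of_reachableIn ⟨q, hq⟩ (ha.2 v hv fun e => (hq a q.end_mem_support).2 e.symm)
  · obtain ⟨q, hq⟩ := h
    exact .of_reachableIn ⟨q, hq⟩ (hb.2 v hv fun e => (hq b q.end_mem_support).2 e.symm)

lemma reachableIn_inter_modelCore {s : Set V} (hs : s ⊆ ⋃ w, φ w) {a b : V}
    (h : G.ReachableIn s a b) (ha : a ∈ modelCore G φ) (hb : b ∈ modelCore G φ) :
    G.ReachableIn (s ∩ modelCore G φ) a b := by
  classical
  obtain ⟨p, hp⟩ := h
  have hps : ∀ x ∈ p.bypass.support, x ∈ s := fun x hx => hp x (p.support_bypass_subset_support hx)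
  exact ⟨p.bypass, fun x hx =>
    ⟨hps x hx, mem_modelCore_of_isPath p.bypass_isPath (fun y hy => hs (hps y hy)) ha hb hx⟩⟩

end ModelCore

namespace IsMinorModel

variable {V ι : Type*} {G : SimpleGraph V} {H : SimpleGraph ι} {φ : ι → Set V}

lemma mem_modelCore_of_adj (hφ : IsMinorModel G H φ) {w w' : ι} (hww' : H.Adj w w') {a b : V}
    (ha : a ∈ φ w) (hb : b ∈ φ w') (hab : G.Adj a b) : a ∈ modelCore G φ := by
  have haU : a ∈ ⋃ w, φ w := mem_iUnion_of_mem w ha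
  have hbU : b ∈ ⋃ w, φ w := mem_iUnion_of_mem w' hb
  refine ⟨haU, fun v _ hva => ?_⟩
  by_cases hvw' : v ∈ φ w'
  · exact ⟨w, fun hvw => disjoint_left.1 (hφ.2.2.1 w w' hww'.ne) hvw hvw', a, ha,
      .refl ⟨haU, hva.symm⟩⟩
  · exact ⟨w', hvw', b, hb, .of_adj hab ⟨haU, hva.symm⟩ ⟨hbU, fun e => hvw' (e ▸ hb)⟩⟩

lemma reachableIn_diff_singleton (hφ : IsMinorModel G H φ) (hH : IsBiconnected H) {v : V}
    {w w' : ι} (hw : v ∉ φ w) (hw' : v ∉ φ w') {a b : V} (ha : a ∈ φ w) (hb : b ∈ φ w') :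
    G.ReachableIn ((⋃ w, φ w) \ {v}) a b := by
  by_cases hv : v ∈ ⋃ w, φ w
  · obtain ⟨w₀, hv₀⟩ := mem_iUnion.1 hv
    have hH' : H.ReachableIn {u | u ≠ w₀} w w' := (hH.2 w₀).preconnected.reachableIn
      (fun e => hw (e ▸ hv₀)) (fun e => hw' (e ▸ hv₀))
    refine (hφ.reachableIn_biUnion hH' ha hb).mono (iUnion₂_subset fun x hx y hy => ?_)
    refine ⟨mem_iUnion_of_mem x hy, ?_⟩
    rintro rfl
    exact disjoint_left.1 (hφ.2.2.1 x w₀ hx) hy hv₀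
  · rw [sdiff_singleton_eq_self hv]
    exact hφ.reachableIn_iUnion hH.1.preconnected ha hb

lemma inter_modelCore_nonempty (hφ : IsMinorModel G H φ) (hH : IsBiconnected H) (w : ι) :
    (φ w ∩ modelCore G φ).Nonempty := by
  obtain ⟨w', hww'⟩ := hH.exists_adj w
  obtain ⟨a, ha, b, hb, hab⟩ := hφ.2.2.2 w w' hww'
  exact ⟨a, ha, hφ.mem_modelCore_of_adj hww' ha hb hab⟩

lemma inter_modelCore (hφ : IsMinorModel G H φ) (hH : IsBiconnected H) :
    IsMinorModel G H (fun w => φ w ∩ modelCore G φ) := by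
  refine ⟨hφ.inter_modelCore_nonempty hH, fun w => ?_,
    fun w w' h => (hφ.2.2.1 w w' h).mono inter_subset_left inter_subset_left, fun w w' h => ?_⟩
  · refine connected_induce_of_reachableIn (hφ.inter_modelCore_nonempty hH w) fun a ha b hb => ?_
    exact reachableIn_inter_modelCore (subset_iUnion φ w)
      ((hφ.2.1 w).preconnected.reachableIn ha.1 hb.1) ha.2 hb.2
  · obtain ⟨a, ha, b, hb, hab⟩ := hφ.2.2.2 w w' h
    exact ⟨a, ⟨ha, hφ.mem_modelCore_of_adj h ha hb hab⟩,
      b, ⟨hb, hφ.mem_modelCore_of_adj h.symm hb ha hab.symm⟩, hab⟩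

lemma isBiconnected_induce_modelCore (hφ : IsMinorModel G H φ) (hH : IsBiconnected H) :
    IsBiconnected (G.induce (modelCore G φ)) := by
  obtain ⟨w₁⟩ := hH.1.nonempty
  obtain ⟨⟨w₂, h₂₁⟩⟩ := (hH.2 w₁).nonempty
  obtain ⟨a₁, ha₁⟩ := hφ.inter_modelCore_nonempty hH w₁
  obtain ⟨a₂, ha₂⟩ := hφ.inter_modelCore_nonempty hH w₂
  rw [isBiconnected_induce_iff]
  refine ⟨connected_induce_of_reachableIn ⟨a₁, ha₁.2⟩ fun a ha b hb => ?_,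
    fun x hx => connected_induce_of_reachableIn ?_ fun a ha b hb => ?_⟩
  · obtain ⟨wa, haw⟩ := mem_iUnion.1 ha.1
    obtain ⟨wb, hbw⟩ := mem_iUnion.1 hb.1
    have hab := hφ.reachableIn_iUnion hH.1.preconnected haw hbw
    exact (reachableIn_inter_modelCore subset_rfl hab ha hb).mono inter_subset_right
  · by_cases hx₁ : x ∈ φ w₁
    · exact ⟨a₂, ha₂.2, fun e => disjoint_left.1 (hφ.2.2.1 w₁ w₂ h₂₁.symm) hx₁ (e ▸ ha₂.1)⟩
    · exact ⟨a₁, ha₁.2, fun e => hx₁ (e ▸ ha₁.1)⟩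
  · obtain ⟨wa, hxwa, a', ha', haa'⟩ := ha.1.2 x hx.1 fun e => ha.2 e.symm
    obtain ⟨wb, hxwb, b', hb', hbb'⟩ := hb.1.2 x hx.1 fun e => hb.2 e.symm
    have hab := haa'.trans ((hφ.reachableIn_diff_singleton hH hxwa hxwb ha' hb').trans hbb'.symm)
    exact (reachableIn_inter_modelCore sdiff_subset hab ha.1 hb.1).mono
      fun y hy => ⟨hy.2, hy.1.2⟩

end IsMinorModel

/-- if `φ` is a minor model of `H` in `G`, then for every biconnected
component `BH` of `H` there is a biconnected component `BG` of `G` such that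
`H[BH]` is a minor of the subgraph of `G` induced by `φ(BH) ∩ BG`. -/
theorem stmt2 {α β : Type} (G : SimpleGraph α) (H : SimpleGraph β) (φ : β → Set α)
    (hφ : IsMinorModel G H φ) (BH : Set β) (hBH : IsBiconnectedComponent H BH) :
    ∃ BG : Set α, IsBiconnectedComponent G BG ∧
      IsMinor (H.induce BH) (G.induce ((⋃ w ∈ BH, φ w) ∩ BG)) := by
  have hφBH := hφ.induce BH
  obtain ⟨BG, hcore, hBG⟩ :=
    exists_isBiconnectedComponent_superset (hφBH.isBiconnected_induce_modelCore hBH.1)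
  exact ⟨BG, hBG, (hφBH.inter_modelCore hBH.1).isMinor_induce fun w a ha =>
    ⟨mem_biUnion w.2 ha.1, hcore ha.2⟩⟩
end

section
/- Let X be a finite set, G an X-labeled graph, Q a set of s-saturated X-labeled graphs for some s ∈ ℕ, and Breaker ⊆ V(G) a set such that G \ Breaker has no labeled Q-minor. Fix k ∈ ℕ and suppose v ∈ Breaker reaches at least k·(s−1)+s distinct labels in G \ (Breaker \ {v}); let L be any set of exactly k·(s−1)+s such labels. Then for every set Y ⊆ V(G)\{v} with |Y| ≤ k, the graph G \ Y contains a labeled Q-minor all of whose labels lie in L. -/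
/-!
For a vertex set `A` let `F(A)` be the labels of `L` that `v` reaches through `A`, so that
`F(V \ (Breaker \ {v})) = L`. Deleting a vertex `y ≠ v` from `A` loses only labels carried by the
vertices that `v` reaches through `A` but not through `A \ {y}`; together with `y` these form a
connected set outside `Breaker`. As `G \ Breaker` has no `Q`-minor and `Q` is `s`-saturated, such
a set carries fewer than `s` labels, so each of the at most `k` deletions of `Y` loses at most
`s - 1` labels. Hence the component of `v` in `G \ Y` still carries `s` labels of `L`, and it is a
branch set for the single-vertex member of `Q` carrying exactly those labels.
-/

open SimpleGraph Set

def IsLabeledMinorModel {α β X : Type*} (G : SimpleGraph α) (labG : α → Set X)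
    (H : SimpleGraph β) (labH : β → Set X) (φ : β → Set α) : Prop :=
  IsMinorModel G H φ ∧ ∀ w, ∀ ℓ ∈ labH w, ∃ a ∈ φ w, ℓ ∈ labG a

def IsLabeledMinor {α β X : Type*} (H : SimpleGraph β) (labH : β → Set X)
    (G : SimpleGraph α) (labG : α → Set X) : Prop :=
  ∃ φ, IsLabeledMinorModel G labG H labH φ

def within {α : Type*} (G : SimpleGraph α) (A : Set α) : SimpleGraph α where
  Adj a b := a ∈ A ∧ b ∈ A ∧ G.Adj a b
  symm := ⟨fun a b ⟨ha, hb, h⟩ => ⟨hb, ha, h.symm⟩⟩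
  loopless := ⟨fun a ⟨_, _, h⟩ => G.loopless.irrefl a h⟩

variable {V X : Type*}

theorem SimpleGraph.Reachable.induction_adj {G : SimpleGraph V} {a b : V} (hab : G.Reachable a b)
    {P : V → Prop} (ha : P a) (hP : ∀ x z, G.Adj x z → P x → P z) : P b := by
  obtain ⟨p⟩ := hab
  induction p with
  | nil => exact ha
  | cons h _ ih => exact ih (hP _ _ h ha)

section Reach

variable (G : SimpleGraph V)

theorem eq_or_mem_of_within_reachable {A : Set V} {a b : V} (h : (within G A).Reachable a b) :
    a = b ∨ b ∈ A :=
  h.induction_adj (P := fun x => a = x ∨ x ∈ A) (Or.inl rfl) fun _ _ hxz _ => Or.inr hxz.2.1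

def reachSet (A : Set V) (v : V) : Set V := {u | (within G A).Reachable v u}

def ConnectedFrom (S : Set V) (v₀ : V) : Prop :=
  v₀ ∈ S ∧ ∀ u ∈ S, (within G S).Reachable v₀ u

theorem connectedFrom_reachSet (A : Set V) (v : V) : ConnectedFrom G (reachSet G A v) v := by
  refine ⟨Reachable.refl v, fun u hu => ?_⟩
  refine (hu.induction_adj (P := fun x => (within G A).Reachable v x ∧
    (within G (reachSet G A v)).Reachable v x) ⟨.rfl, .rfl⟩ ?_).2
  rintro x z hxz ⟨hx, hx'⟩
  have hz : (within G A).Reachable v z := hx.trans hxz.reachable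
  exact ⟨hz, hx'.trans (Adj.reachable ⟨hx, hz, hxz.2.2⟩)⟩

theorem connectedFrom_insert_reachSet_diff (A : Set V) (v y : V) :
    ConnectedFrom G (insert y (reachSet G A v \ reachSet G (A \ {y}) v)) y := by
  set R := reachSet G (A \ {y}) v
  set S := insert y (reachSet G A v \ R)
  refine ⟨mem_insert _ _, fun u hu => ?_⟩
  rcases hu with rfl | ⟨huA, huR⟩
  · exact .rfl
  -- Walk from `v` to `u` inside `A`: every vertex on it stays in `R` or is joined to `y` in `S`.
  refine (huA.induction_adj (P := fun x => (within G A).Reachable v x ∧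
    (x ∈ R ∨ (within G S).Reachable y x)) ⟨.rfl, Or.inl .rfl⟩ ?_).2.resolve_left huR
  rintro x z hxz ⟨hx, hxR | hxy⟩
  all_goals
    have hz : (within G A).Reachable v z := hx.trans hxz.reachable
    refine ⟨hz, or_iff_not_imp_left.mpr fun hzR => ?_⟩
    have hzS : z ∈ S := Or.inr ⟨hz, hzR⟩
  · by_cases hzy : z = y
    · rw [hzy]
    by_cases hxy : x = y
    · have hxS : x ∈ S := hxy ▸ mem_insert y _
      rw [← hxy]
      exact Adj.reachable ⟨hxS, hzS, hxz.2.2⟩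
    · exact absurd (hxR.trans (Adj.reachable ⟨⟨hxz.1, hxy⟩, ⟨hxz.2.1, hzy⟩, hxz.2.2⟩)) hzR
  · have hxS : x ∈ S := by
      rcases eq_or_mem_of_within_reachable G hxy with rfl | h
      exacts [mem_insert _ _, h]
    exact hxy.trans (Adj.reachable ⟨hxS, hzS, hxz.2.2⟩)

theorem connected_induce_of_connectedFrom {U S : Set V} (hSU : S ⊆ U) {v₀ : V}
    (hS : ConnectedFrom G S v₀) : ((G.induce U).induce {a : U | a.1 ∈ S}).Connected := by
  let lift : S → {a : U | a.1 ∈ S} := fun x => ⟨⟨x, hSU x.2⟩, x.2⟩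
  have hreach : ∀ u (hu : u ∈ S),
      ((G.induce U).induce {a : U | a.1 ∈ S}).Reachable (lift ⟨v₀, hS.1⟩) (lift ⟨u, hu⟩) :=
    fun u hu => (hS.2 u hu).induction_adj
      (P := fun x => ∀ hx : x ∈ S,
        ((G.induce U).induce {a : U | a.1 ∈ S}).Reachable (lift ⟨v₀, hS.1⟩) (lift ⟨x, hx⟩))
      (fun _ => .rfl) (fun _ _ hxz hx _ => (hx hxz.1).trans (Adj.reachable hxz.2.2)) hu
  rw [connected_iff]
  exact ⟨fun a b => (hreach _ a.2).symm.trans (hreach _ b.2), ⟨lift ⟨v₀, hS.1⟩⟩⟩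

theorem isLabeledMinor_of_connectedFrom {β : Type*} {H : SimpleGraph β} {labH : β → Set X}
    {w : β} (hw : ∀ w', w' = w) (lab : V → Set X) {U S : Set V} (hSU : S ⊆ U) {v₀ : V}
    (hS : ConnectedFrom G S v₀) (hcar : labH w ⊆ ⋃ a ∈ S, lab a) :
    IsLabeledMinor H labH (G.induce U) (fun a => lab a.1) := by
  refine ⟨fun _ => {a : U | a.1 ∈ S}, ⟨⟨fun _ => ⟨⟨v₀, hSU hS.1⟩, hS.1⟩,
    fun _ => connected_induce_of_connectedFrom G hSU hS, ?_, ?_⟩, ?_⟩⟩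
  · intro w₁ w₂ hne
    exact absurd ((hw w₁).trans (hw w₂).symm) hne
  · intro w₁ w₂ hadj
    rw [hw w₁, hw w₂] at hadj
    exact absurd hadj (H.loopless.irrefl w)
  · intro w' ℓ hℓ
    rw [hw w'] at hℓ
    obtain ⟨a, haS, hℓa⟩ := mem_iUnion₂.mp (hcar hℓ)
    exact ⟨⟨a, hSU haS⟩, haS, hℓa⟩

end Reach

section Labels

variable (G : SimpleGraph V) {lab : V → Set X}

def CarriesFewLabels (lab : V → Set X) (C : Set V) (s : ℕ) : Prop :=
  ∀ S ⊆ C, ∀ v₀, ConnectedFrom G S v₀ → ∀ T : Finset X, (T : Set X) ⊆ ⋃ a ∈ S, lab a → T.card < s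

theorem carriesFewLabels_of_labeledMinorFree {ι : Type*} {Qv : ι → Type*}
    {QG : ∀ i, SimpleGraph (Qv i)} {Qlab : ∀ i, Qv i → Set X} {s : ℕ}
    (hsat : ∀ L : Finset X, L.card = s → ∃ i, ∃ w : Qv i, (∀ w', w' = w) ∧ Qlab i w = ↑L)
    {C : Set V} (hfree : ∀ i, ¬ IsLabeledMinor (QG i) (Qlab i) (G.induce C) (fun a => lab a.1)) :
    CarriesFewLabels G lab C s := by
  intro S hSC v₀ hS T hT
  by_contra! hsT
  obtain ⟨T', hT'T, hT'⟩ := Finset.exists_subset_card_eq hsT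
  obtain ⟨i, w, hw, hlab⟩ := hsat T' hT'
  exact hfree i (isLabeledMinor_of_connectedFrom G hw lab hSC hS
    (hlab ▸ (Finset.coe_subset.mpr hT'T).trans hT))

open Classical in
noncomputable def reachedLabels (lab : V → Set X) (A : Set V) (v : V) (L : Finset X) :
    Finset X :=
  L.filter (· ∈ ⋃ b ∈ reachSet G A v, lab b)

theorem mem_reachedLabels {A : Set V} {v : V} {L : Finset X} {ℓ : X} :
    ℓ ∈ reachedLabels G lab A v L ↔ ℓ ∈ L ∧ ∃ b ∈ reachSet G A v, ℓ ∈ lab b := by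
  simp [reachedLabels]

variable {C : Set V} {s : ℕ}

theorem card_reachedLabels_le_diff_singleton (hC : CarriesFewLabels G lab C s) {A : Set V}
    {v y : V} (hAC : A \ {v} ⊆ C)
    (hyv : y ≠ v) (L : Finset X) :
    (reachedLabels G lab A v L).card ≤ (reachedLabels G lab (A \ {y}) v L).card + (s - 1) := by
  classical
  by_cases hyA : y ∈ A
  swap
  · rw [sdiff_singleton_eq_self hyA]
    omega
  set F := reachedLabels G lab A v L
  set F' := reachedLabels G lab (A \ {y}) v L
  set S := insert y (reachSet G A v \ reachSet G (A \ {y}) v)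
  have hSC : S ⊆ C := by
    rintro u (rfl | ⟨huA, huR⟩)
    · exact hAC ⟨hyA, hyv⟩
    rcases eq_or_mem_of_within_reachable G huA with rfl | hu
    · exact absurd (Reachable.refl _) huR
    · exact hAC ⟨hu, fun huv => huR (huv ▸ Reachable.refl _)⟩
  have hlost : ((F \ F' : Finset X) : Set X) ⊆ ⋃ a ∈ S, lab a := by
    intro ℓ hℓ
    obtain ⟨hℓF, hℓF'⟩ := Finset.mem_sdiff.mp hℓ
    obtain ⟨hℓL, b, hb, hℓb⟩ := (mem_reachedLabels G).mp hℓF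
    have hbR : b ∉ reachSet G (A \ {y}) v := fun hbR =>
      hℓF' ((mem_reachedLabels G).mpr ⟨hℓL, b, hbR, hℓb⟩)
    exact mem_iUnion₂.mpr ⟨b, Or.inr ⟨hb, hbR⟩, hℓb⟩
  have hfew := hC S hSC y (connectedFrom_insert_reachSet_diff G A v y) _ hlost
  have := Finset.card_le_card_sdiff_add_card (s := F) (t := F')
  omega

theorem card_reachedLabels_le_sdiff (hC : CarriesFewLabels G lab C s) {A : Set V} {v : V}
    (hAC : A \ {v} ⊆ C) (L : Finset X) (Y : Finset V) (hvY : v ∉ Y) :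
    (reachedLabels G lab A v L).card ≤
      (reachedLabels G lab (A \ Y) v L).card + Y.card * (s - 1) := by
  classical
  induction Y using Finset.induction_on with
  | empty => simp
  | insert y Y hyY ih =>
    rw [Finset.mem_insert, not_or] at hvY
    have hstep := card_reachedLabels_le_diff_singleton G hC (A := A \ Y)
      (fun u hu => hAC ⟨hu.1.1, hu.2⟩) (Ne.symm hvY.1) L
    rw [Finset.coe_insert, ← union_singleton, ← sdiff_sdiff, Finset.card_insert_of_notMem hyY,
      add_one_mul]
    linarith [ih hvY.2]

end Labels

theorem stmt7_general {V X ι : Type}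
    (G : SimpleGraph V) (lab : V → Set X)
    {Qv : ι → Type} (QG : ∀ i, SimpleGraph (Qv i)) (Qlab : ∀ i, Qv i → Set X)
    (s : ℕ)
    (hsat : ∀ Lset : Finset X, Lset.card = s →
      ∃ i, ∃ w : Qv i, (∀ w' : Qv i, w' = w) ∧ Qlab i w = ↑Lset)
    (Breaker : Set V)
    (hB : ∀ i, ¬ IsLabeledMinor (QG i) (Qlab i)
        (G.induce Breakerᶜ) (fun a => lab a.1))
    (k : ℕ) (v : V)
    (Lset : Finset X) (hLcard : Lset.card = k * (s - 1) + s)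
    (hreach : ∀ ℓ ∈ Lset, ∃ b, (within G ((Breaker \ {v})ᶜ)).Reachable v b ∧ ℓ ∈ lab b)
    (Y : Finset V) (hvY : v ∉ Y) (hYk : Y.card ≤ k) :
    ∃ i, (∀ w, Qlab i w ⊆ ↑Lset) ∧
      IsLabeledMinor (QG i) (Qlab i) (G.induce ((↑Y : Set V)ᶜ)) (fun a => lab a.1) := by
  set A₀ : Set V := (Breaker \ {v})ᶜ
  have hA₀ : A₀ \ {v} ⊆ Breakerᶜ := fun u hu hub => hu.1 ⟨hub, hu.2⟩
  have hall : reachedLabels G lab A₀ v Lset = Lset := by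
    ext ℓ
    rw [mem_reachedLabels]
    exact ⟨And.left, fun hℓ => ⟨hℓ, hreach ℓ hℓ⟩⟩
  have hcount := card_reachedLabels_le_sdiff G (carriesFewLabels_of_labeledMinorFree G hsat hB)
    hA₀ Lset Y hvY
  have hs : s ≤ (reachedLabels G lab (A₀ \ ↑Y) v Lset).card := by
    rw [hall, hLcard] at hcount
    linarith [Nat.mul_le_mul_right (s - 1) hYk]
  obtain ⟨T, hTL, hT⟩ := Finset.exists_subset_card_eq hs
  obtain ⟨i, w, hw, hlab⟩ := hsat T hT
  refine ⟨i, fun w' => ?_, isLabeledMinor_of_connectedFrom G hw lab ?_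
    (connectedFrom_reachSet G (A₀ \ ↑Y) v) ?_⟩
  · rw [hw w', hlab]
    exact_mod_cast fun ℓ hℓ => ((mem_reachedLabels G).mp (hTL hℓ)).1
  · intro u hu
    rcases eq_or_mem_of_within_reachable G hu with rfl | h
    exacts [hvY, h.2]
  · rw [hlab]
    intro ℓ hℓ
    obtain ⟨-, b, hb, hℓb⟩ := (mem_reachedLabels G).mp (hTL hℓ)
    exact mem_iUnion₂.mpr ⟨b, hb, hℓb⟩

/-- Let `Q` be an `s`-saturated family of `X`-labeled graphs (for
every set of `s` labels, `Q` contains the single-vertex graph carrying exactly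
those labels), and `Breaker` a set such that `G \ Breaker` has no labeled
`Q`-minor. If `v ∈ Breaker` reaches a set `Lset` of `k·(s−1)+s` distinct labels in
`G \ (Breaker \ {v})`, then for every `Y ⊆ V(G) \ {v}` with `|Y| ≤ k`, the graph
`G \ Y` contains a labeled `Q`-minor all of whose labels lie in `Lset`. -/
theorem stmt7 {V X ι : Type} [DecidableEq V] [DecidableEq X]
    (G : SimpleGraph V) (lab : V → Set X)
    {Qv : ι → Type} (QG : ∀ i, SimpleGraph (Qv i)) (Qlab : ∀ i, Qv i → Set X)
    (s : ℕ)
    (hsat : ∀ Lset : Finset X, Lset.card = s →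
      ∃ i, ∃ w : Qv i, (∀ w' : Qv i, w' = w) ∧ Qlab i w = ↑Lset)
    (Breaker : Set V)
    (hB : ∀ i, ¬ IsLabeledMinor (QG i) (Qlab i)
        (G.induce Breakerᶜ) (fun a => lab a.1))
    (k : ℕ) (v : V) (hv : v ∈ Breaker)
    (Lset : Finset X) (hLcard : Lset.card = k * (s - 1) + s)
    (hreach : ∀ ℓ ∈ Lset, ∃ b, (within G ((Breaker \ {v})ᶜ)).Reachable v b ∧ ℓ ∈ lab b)
    (Y : Finset V) (hvY : v ∉ Y) (hYk : Y.card ≤ k) :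
    ∃ i, (∀ w, Qlab i w ⊆ ↑Lset) ∧
      IsLabeledMinor (QG i) (Qlab i) (G.induce ((↑Y : Set V)ᶜ)) (fun a => lab a.1) :=
  stmt7_general G lab QG Qlab s hsat Breaker hB k v Lset hLcard hreach Y hvY hYk
end

section
/- Let Q be a set of connected X-labeled graphs and let G_A, G_B, G'_B be X-labeled t-boundaried graphs with folio_{Q,t}(G_B) = folio_{Q,t}(G'_B), where folio_{Q,t}(H) is the set of X-labeled t-boundaried graphs in mpcs_{+t}(Q) that are boundaried labeled minors of H. Then folio_{Q,t}(G_A ⊕ G_B) = folio_{Q,t}(G_A ⊕ G'_B). -/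
open SimpleGraph Set

def compIn {α : Type*} (G : SimpleGraph α) (A : Set α) (a : α) : Set α :=
  {b | b ∈ A ∧ (within G A).Reachable a b}

/-- An `X`-labeled `t`-boundaried graph: a graph with labelsets from `X` and an
injective (partial) boundary index function into `Fin t`. -/
structure BLGraph (X : Type) (t : ℕ) where
  V : Type
  G : SimpleGraph V
  lab : V → Set X
  bd : V → Option (Fin t)
  inj : ∀ a b i, bd a = some i → bd b = some i → a = b

namespace BLGraph

variable {X : Type} {t : ℕ}

/-- Vertices of the glued graph `G₁ ⊕ G₂`: all of `G₁`, plus the vertices of `G₂`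
whose boundary index (if any) does not occur in `G₁`. -/
def glueV (G₁ G₂ : BLGraph X t) : Type :=
  G₁.V ⊕ {b : G₂.V // ∀ i, G₂.bd b = some i → ∀ a, G₁.bd a ≠ some i}

/-- The canonical map of `G₂` into the glued graph. -/
noncomputable def emb2 (G₁ G₂ : BLGraph X t) (b : G₂.V) : glueV G₁ G₂ :=
  letI : Decidable (∃ i, G₂.bd b = some i ∧ ∃ a, G₁.bd a = some i) :=
    Classical.propDecidable _
  if h : ∃ i, G₂.bd b = some i ∧ ∃ a, G₁.bd a = some i
  then Sum.inl h.choose_spec.2.choose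
  else Sum.inr ⟨b, fun i hi a ha => h ⟨i, hi, a, ha⟩⟩

/-- The gluing operation `G₁ ⊕ G₂`, identifying boundary vertices carrying equal
indices and unioning labelsets. -/
noncomputable def glue (G₁ G₂ : BLGraph X t) : BLGraph X t where
  V := glueV G₁ G₂
  G := SimpleGraph.fromRel (fun x y =>
    (∃ a b, x = Sum.inl a ∧ y = Sum.inl b ∧ G₁.G.Adj a b) ∨
    (∃ a b, x = emb2 G₁ G₂ a ∧ y = emb2 G₁ G₂ b ∧ G₂.G.Adj a b))
  lab x := {ℓ | (∃ a, x = Sum.inl a ∧ ℓ ∈ G₁.lab a) ∨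
    (∃ b, x = emb2 G₁ G₂ b ∧ ℓ ∈ G₂.lab b)}
  bd := Sum.elim G₁.bd (fun b => G₂.bd b.1)
  inj := by
    rintro (a | a) (b | b) i ha hb
    · exact congrArg Sum.inl (G₁.inj a b i ha hb)
    · exact absurd ha (b.2 i hb a)
    · exact absurd hb (a.2 i ha b)
    · exact congrArg Sum.inr (Subtype.ext (G₂.inj _ _ i ha hb))

/-- A boundaried labeled minor model of the pattern `P` in the host `H`. -/
def BMinorModel (P H : BLGraph X t) (φ : P.V → Set H.V) : Prop :=
  IsMinorModel H.G P.G φ ∧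
  (∀ w, ∀ ℓ ∈ P.lab w, ∃ a ∈ φ w, ℓ ∈ H.lab a) ∧
  (∀ w a, a ∈ φ w → ∀ i, H.bd a = some i → P.bd w = some i) ∧
  (∀ w i, P.bd w = some i → ∃ a ∈ φ w, H.bd a = some i)

/-- `P` is a boundaried labeled minor of `H`. -/
def BMinor (P H : BLGraph X t) : Prop := ∃ φ, BMinorModel P H φ

/-- Piece: a single boundary vertex, with no labels. -/
def pieceBd (H : BLGraph X t) (a : H.V) : BLGraph X t where
  V := PUnit
  G := ⊥
  lab _ := ∅
  bd _ := H.bd a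
  inj := fun x y _ _ _ => Subsingleton.elim x y

/-- Piece: a single boundary vertex carrying one of its labels. -/
def pieceLab (H : BLGraph X t) (a : H.V) (ℓ : X) : BLGraph X t where
  V := PUnit
  G := ⊥
  lab _ := {ℓ}
  bd _ := H.bd a
  inj := fun x y _ _ _ => Subsingleton.elim x y

/-- Piece: a single edge between two boundary vertices, with no labels. -/
def pieceEdge (H : BLGraph X t) (a b : H.V) (hne : a ≠ b) : BLGraph X t where
  V := Bool
  G := SimpleGraph.fromRel (fun x y => x = true ∧ y = false)
  lab _ := ∅
  bd x := cond x (H.bd a) (H.bd b)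
  inj := by
    intro x y i hx hy
    cases x <;> cases y
    · rfl
    · exact absurd (H.inj b a i hx hy) fun h => hne h.symm
    · exact absurd (H.inj a b i hx hy) hne
    · rfl

/-- Piece: a connected component `C` of `H` minus its boundary (the component of a
non-boundary vertex `c`), together with its boundary neighbors, with
boundary-boundary edges removed and boundary labels erased. -/
def pieceComp (H : BLGraph X t) (c : H.V) : BLGraph X t where
  V := {x : H.V // x ∈ compIn H.G {y | H.bd y = none} c ∨
        (H.bd x ≠ none ∧ ∃ y ∈ compIn H.G {y | H.bd y = none} c, H.G.Adj x y)}
  G := SimpleGraph.fromRel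
    (fun x y => H.G.Adj x.1 y.1 ∧ (H.bd x.1 = none ∨ H.bd y.1 = none))
  lab x := {ℓ | H.bd x.1 = none ∧ ℓ ∈ H.lab x.1}
  bd x := H.bd x.1
  inj := fun x y i hx hy => Subtype.ext (H.inj _ _ i hx hy)

/-- The pieces of a boundaried labeled graph. -/
def pcs (H : BLGraph X t) : Set (BLGraph X t) :=
  {P | (∃ a, H.bd a ≠ none ∧ P = pieceBd H a) ∨
       (∃ a ℓ, H.bd a ≠ none ∧ ℓ ∈ H.lab a ∧ P = pieceLab H a ℓ) ∨
       (∃ a b, ∃ hne : a ≠ b, H.bd a ≠ none ∧ H.bd b ≠ none ∧ H.G.Adj a b ∧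
          P = pieceEdge H a b hne) ∨
       (∃ c, H.bd c = none ∧ P = pieceComp H c)}

/-- The `⊕`-sum of a nonempty list of boundaried labeled graphs. -/
noncomputable def glueList : BLGraph X t → List (BLGraph X t) → BLGraph X t
  | H, [] => H
  | H, P :: l => glue H (glueList P l)

/-- The multipieces of `H`: all `⊕`-sums of nonempty sets of pieces of `H`. -/
def mpcs (H : BLGraph X t) : Set (BLGraph X t) :=
  {K | ∃ (P : BLGraph X t) (l : List (BLGraph X t)),
    (∀ p ∈ P :: l, p ∈ pcs H) ∧ (P :: l).Nodup ∧ K = glueList P l}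

/-- Shift all boundary indices of a `t`-boundaried graph into `Fin (t+1)`
(the "do nothing" extension step). -/
def bumpBd (H : BLGraph X t) : BLGraph X (t+1) where
  V := H.V
  G := H.G
  lab := H.lab
  bd a := (H.bd a).map Fin.castSucc
  inj := by
    intro a b i ha hb
    obtain ⟨j, hj, hj2⟩ := Option.map_eq_some_iff.mp ha
    obtain ⟨j', hj', hj'2⟩ := Option.map_eq_some_iff.mp hb
    have : j' = j := Fin.castSucc_injective _ (hj'2.trans hj2.symm)
    subst this
    exact H.inj a b j' hj hj'

/-- Extension step "increase the boundary": give a non-boundary vertex `v` the new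
index `t+1`. -/
noncomputable def raiseBd (H : BLGraph X t) (v : H.V) : BLGraph X (t+1) :=
  letI := Classical.decEq H.V
  { V := H.V
    G := H.G
    lab := H.lab
    bd := fun a => if a = v then some (Fin.last t) else (H.bd a).map Fin.castSucc
    inj := by
      intro a b i ha hb
      split_ifs at ha hb with h1 h2 h2
      · exact h1.trans h2.symm
      · obtain ⟨j, hj, hj2⟩ := Option.map_eq_some_iff.mp hb
        have : i = Fin.last t := (Option.some_injective _ ha).symm
        exact absurd (hj2.trans this) (Fin.castSucc_lt_last j).ne
      · obtain ⟨j, hj, hj2⟩ := Option.map_eq_some_iff.mp ha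
        have : i = Fin.last t := (Option.some_injective _ hb).symm
        exact absurd (hj2.trans this) (Fin.castSucc_lt_last j).ne
      · obtain ⟨j, hj, hj2⟩ := Option.map_eq_some_iff.mp ha
        obtain ⟨j', hj', hj'2⟩ := Option.map_eq_some_iff.mp hb
        have : j' = j := Fin.castSucc_injective _ (hj'2.trans hj2.symm)
        subst this
        exact H.inj a b j' hj hj' }

/-- Extension step "split": split a boundary vertex `u` into `u` and a new vertex
with index `t+1` joined to `u` by an edge; the edges from `u` to the vertices of
`S` move to the new vertex, and the labels in `K` move to the new vertex. -/
noncomputable def splitBd (H : BLGraph X t) (u : H.V) (S : Set H.V) (K : Set X) :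
    BLGraph X (t+1) :=
  letI := Classical.decEq H.V
  { V := H.V ⊕ Unit
    G := SimpleGraph.fromRel (fun x y =>
      match x, y with
      | .inl a, .inl b => H.G.Adj a b ∧ ¬(b = u ∧ a ∈ S) ∧ ¬(a = u ∧ b ∈ S)
      | .inl a, .inr _ => (H.G.Adj a u ∧ a ∈ S) ∨ a = u
      | _, _ => False)
    lab := Sum.elim (fun a => if a = u then H.lab a \ K else H.lab a)
      (fun _ => K ∩ H.lab u)
    bd := Sum.elim (fun a => (H.bd a).map Fin.castSucc) (fun _ => some (Fin.last t))
    inj := by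
      rintro (a | a) (b | b) i ha hb
      · obtain ⟨j, hj, hj2⟩ := Option.map_eq_some_iff.mp ha
        obtain ⟨j', hj', hj'2⟩ := Option.map_eq_some_iff.mp hb
        have : j' = j := Fin.castSucc_injective _ (hj'2.trans hj2.symm)
        subst this
        exact congrArg Sum.inl (H.inj a b j' hj hj')
      · obtain ⟨j, hj, hj2⟩ := Option.map_eq_some_iff.mp ha
        have : i = Fin.last t := (Option.some_injective _ hb).symm
        exact absurd (hj2.trans this) (Fin.castSucc_lt_last j).ne
      · obtain ⟨j, hj, hj2⟩ := Option.map_eq_some_iff.mp hb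
        have : i = Fin.last t := (Option.some_injective _ ha).symm
        exact absurd (hj2.trans this) (Fin.castSucc_lt_last j).ne
      · exact congrArg Sum.inr rfl }

/-- The single-step extension `ext₁` of a boundaried labeled graph. -/
def ext1 (H : BLGraph X t) : Set (BLGraph X (t+1)) :=
  {K | K = bumpBd H ∨
       (∃ v, H.bd v = none ∧ K = raiseBd H v) ∨
       (∃ u S Kl, H.bd u ≠ none ∧ S ⊆ {a | H.G.Adj a u} ∧ Kl ⊆ H.lab u ∧
          K = splitBd H u S Kl)}

/-- `ext_t(Q)`: all `t`-boundaried graphs obtainable from members of `Q` (viewed as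
`0`-boundaried graphs) by `t` successive extension operations. -/
def extT (X : Type) : (t : ℕ) → Set (BLGraph X 0) → Set (BLGraph X t)
  | 0, Q => Q
  | (t+1), Q => {K | ∃ H ∈ extT X t Q, K ∈ ext1 H}

/-- `mpcs_{+t}(Q) = mpcs(ext_t(Q))`. -/
def mpcsPlus (t : ℕ) (Q : Set (BLGraph X 0)) : Set (BLGraph X t) :=
  {K | ∃ H ∈ extT X t Q, K ∈ mpcs H}

/-- `folio_{Q,t}(H)`: the members of `mpcs_{+t}(Q)` that are boundaried labeled
minors of `H`. -/
def folioQ (Q : Set (BLGraph X 0)) (t : ℕ) (H : BLGraph X t) : Set (BLGraph X t) :=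
  {P | P ∈ mpcsPlus t Q ∧ BMinor P H}

/-- Isomorphism of boundaried labeled graphs. -/
def BLIso (H K : BLGraph X t) : Prop :=
  ∃ e : H.V ≃ K.V, (∀ a b, H.G.Adj a b ↔ K.G.Adj (e a) (e b)) ∧
    (∀ a, H.lab a = K.lab (e a)) ∧ (∀ a, H.bd a = K.bd (e a))

end BLGraph

/-!
Let `φ` model a multipiece `K = p₁ ⊕ ⋯ ⊕ pₙ` (the `pᵢ` pieces of some `H ∈ ext_t(Q)`) in
`GA ⊕ GB`. The branch set of an interior vertex of `K` is connected and avoids the boundary, so it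
lies in the interior of `GA` or in the interior of `GB`, and within a component piece all interior
vertices are on the same side. Collect the pieces that use `GB` (through interior branch sets, or
through a boundary edge or label realized only in `GB`), together with single boundary vertices
for the indices shared by `K` and `GB`. Their `⊕`-sum `PB` is again a multipiece of `H`, and the
part of `φ` inside `GB` is a model of `PB` in `GB`. So `PB` lies in the folio of `GB`, hence in
that of `GB'`, and a model of `PB` in `GB'` together with the part of `φ` inside `GA` is a model of
`K` in `GA ⊕ GB'`.
-/

namespace SimpleGraph

variable {V V' : Type*} {G : SimpleGraph V} {G' : SimpleGraph V'}

theorem exists_boundary_adj_of_induce_connected {S T : Set V} (hS : (G.induce S).Connected)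
    {x y : V} (hx : x ∈ S) (hy : y ∈ S) (hxT : x ∈ T) (hyT : y ∉ T) :
    ∃ a ∈ S, ∃ b ∈ S, a ∈ T ∧ b ∉ T ∧ G.Adj a b := by
  obtain ⟨p⟩ := hS.preconnected ⟨x, hx⟩ ⟨y, hy⟩
  obtain ⟨d, -, hd, hd'⟩ := p.exists_boundary_dart {z | z.1 ∈ T} hxT hyT
  exact ⟨_, d.fst.2, _, d.snd.2, hd, hd', d.adj⟩

theorem induce_image_connected (f : V → V') {S : Set V} (hS : (G.induce S).Connected)
    (hf : ∀ a ∈ S, ∀ b ∈ S, G.Adj a b → G'.Adj (f a) (f b)) :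
    (G'.induce (f '' S)).Connected :=
  let F : G.induce S →g G'.induce (f '' S) :=
    ⟨fun a => ⟨f a, a, a.2, rfl⟩, fun {a b} h => hf _ a.2 _ b.2 h⟩
  hS.map F (by rintro ⟨_, a, ha, rfl⟩; exact ⟨⟨a, ha⟩, rfl⟩)

theorem induce_connected_of_image (f : V → V') {S : Set V} (hf : S.InjOn f)
    (himg : (G'.induce (f '' S)).Connected)
    (hrefl : ∀ a ∈ S, ∀ b ∈ S, G'.Adj (f a) (f b) → G.Adj a b) :
    (G.induce S).Connected := by
  let e := Equiv.Set.imageOfInjOn f S hf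
  have he : ∀ y, f (e.symm y) = y := fun y => congrArg Subtype.val (e.apply_symm_apply y)
  refine himg.map ⟨e.symm, fun {y y'} h => hrefl _ (e.symm y).2 _ (e.symm y').2 ?_⟩
    e.symm.surjective
  simpa [he] using h

theorem induce_inter_connected {S T : Set V} {v : V} (hS : (G.induce S).Connected)
    (hvS : v ∈ S) (hvT : v ∈ T)
    (hT : ∀ x ∈ S, ∀ y ∈ S, x ∈ T → x ≠ v → G.Adj x y → y ∈ T) :
    (G.induce (S ∩ T)).Connected := by
  have reach : ∀ (a b : S), (G.induce S).Walk a b → b = ⟨v, hvS⟩ → ∀ ha : a.1 ∈ T,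
      (G.induce (S ∩ T)).Reachable ⟨a, a.2, ha⟩ ⟨v, hvS, hvT⟩ := by
    intro a b p
    induction p with
    | nil => rintro rfl _; rfl
    | @cons a c _ hac _ ih =>
      rintro rfl ha
      by_cases hav : a.1 = v
      · exact (Subtype.ext hav : (⟨a, a.2, ha⟩ : ↥(S ∩ T)) = ⟨v, hvS, hvT⟩) ▸ .rfl
      · have hc := hT _ a.2 _ c.2 ha hav hac
        exact (show (G.induce (S ∩ T)).Adj ⟨a, a.2, ha⟩ ⟨c, c.2, hc⟩ from hac).reachable.trans
          (ih rfl hc)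
  have : Nonempty ↥(S ∩ T) := ⟨⟨v, hvS, hvT⟩⟩
  refine ⟨fun x y => ?_⟩
  obtain ⟨px⟩ := hS.preconnected ⟨x, x.2.1⟩ ⟨v, hvS⟩
  obtain ⟨py⟩ := hS.preconnected ⟨y, y.2.1⟩ ⟨v, hvS⟩
  exact (reach _ _ px rfl x.2.2).trans (reach _ _ py rfl y.2.2).symm

theorem induce_union_connected_of_nonempty {S T : Set V}
    (hS : S.Nonempty → (G.induce S).Connected) (hT : T.Nonempty → (G.induce T).Connected)
    (hST : S.Nonempty → T.Nonempty → (S ∩ T).Nonempty) (hne : (S ∪ T).Nonempty) :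
    (G.induce (S ∪ T)).Connected := by
  rcases S.eq_empty_or_nonempty with rfl | hS'
  · rw [Set.empty_union] at hne ⊢
    exact hT hne
  rcases T.eq_empty_or_nonempty with rfl | hT'
  · rw [Set.union_empty]
    exact hS hS'
  exact induce_union_connected (hS hS').preconnected (hT hT').preconnected (hST hS' hT')

end SimpleGraph

namespace BLGraph

variable {X : Type} {t : ℕ}

def interior (P : BLGraph X t) : Set P.V := {a | P.bd a = none}

@[simp] lemma mem_interior {P : BLGraph X t} {a : P.V} : a ∈ P.interior ↔ P.bd a = none :=
  Iff.rfl

lemma bd_eq_of_eq_some {P : BLGraph X t} {a : P.V} {i j : Fin t} (ha : P.bd a = some i)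
    (ha' : P.bd a = some j) : i = j :=
  Option.some_injective _ (ha.symm.trans ha')

section Glue

-- lets `Sum.inl` and case analysis see the vertices of `glue G₁ G₂` as a sum type
attribute [reducible] glueV

variable (G₁ G₂ : BLGraph X t)

lemma emb2_of_bd_eq {b : G₂.V} {a : G₁.V} {i : Fin t} (hb : G₂.bd b = some i)
    (ha : G₁.bd a = some i) : emb2 G₁ G₂ b = Sum.inl a := by
  unfold emb2
  split
  · next hex =>
    have hi : hex.choose = i := bd_eq_of_eq_some hex.choose_spec.1 hb
    exact congrArg Sum.inl (G₁.inj _ _ i (hi ▸ hex.choose_spec.2.choose_spec) ha)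
  · next hex => exact absurd ⟨i, hb, a, ha⟩ hex

lemma emb2_of_forall_ne {b : G₂.V} (hb : ∀ i, G₂.bd b = some i → ∀ a, G₁.bd a ≠ some i) :
    emb2 G₁ G₂ b = Sum.inr ⟨b, hb⟩ := by
  unfold emb2
  split
  · next hex =>
    obtain ⟨i, hi, a, ha⟩ := hex
    exact absurd ha (hb i hi a)
  · rfl

lemma emb2_eq_inl_iff {b : G₂.V} {a : G₁.V} :
    emb2 G₁ G₂ b = Sum.inl a ↔ ∃ i, G₂.bd b = some i ∧ G₁.bd a = some i := by
  refine ⟨fun h => ?_, fun ⟨i, hb, ha⟩ => emb2_of_bd_eq G₁ G₂ hb ha⟩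
  by_cases hex : ∃ i, G₂.bd b = some i ∧ ∃ a', G₁.bd a' = some i
  · obtain ⟨i, hi, a', ha'⟩ := hex
    rw [emb2_of_bd_eq G₁ G₂ hi ha', Sum.inl.injEq] at h
    exact ⟨i, hi, h ▸ ha'⟩
  · push Not at hex
    rw [emb2_of_forall_ne G₁ G₂ hex] at h
    cases h

lemma emb2_eq_inr {b : G₂.V} {c} (h : emb2 G₁ G₂ b = Sum.inr c) : b = c.1 := by
  by_cases hex : ∃ i, G₂.bd b = some i ∧ ∃ a', G₁.bd a' = some i
  · obtain ⟨i, hi, a', ha'⟩ := hex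
    rw [emb2_of_bd_eq G₁ G₂ hi ha'] at h
    cases h
  · push Not at hex
    rw [emb2_of_forall_ne G₁ G₂ hex, Sum.inr.injEq] at h
    exact congrArg Subtype.val h

lemma emb2_injective : Function.Injective (emb2 G₁ G₂) := by
  intro b b' h
  rcases hb : emb2 G₁ G₂ b with a | c
  · obtain ⟨i, hbi, hai⟩ := (emb2_eq_inl_iff G₁ G₂).mp hb
    obtain ⟨i', hbi', hai'⟩ := (emb2_eq_inl_iff G₁ G₂).mp (h.symm.trans hb)
    exact G₂.inj _ _ i hbi (bd_eq_of_eq_some hai' hai ▸ hbi')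
  · exact (emb2_eq_inr G₁ G₂ hb).trans (emb2_eq_inr G₁ G₂ (h.symm.trans hb)).symm

lemma glue_bd_emb2 (b : G₂.V) : (glue G₁ G₂).bd (emb2 G₁ G₂ b) = G₂.bd b := by
  rcases hb : emb2 G₁ G₂ b with a | c
  · obtain ⟨i, hbi, hai⟩ := (emb2_eq_inl_iff G₁ G₂).mp hb
    exact hai.trans hbi.symm
  · exact congrArg G₂.bd (emb2_eq_inr G₁ G₂ hb).symm

lemma glue_cases (x : (glue G₁ G₂).V) : (∃ a, x = Sum.inl a) ∨ ∃ b, x = emb2 G₁ G₂ b := by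
  rcases x with a | c
  · exact .inl ⟨a, rfl⟩
  · exact .inr ⟨c.1, (emb2_of_forall_ne G₁ G₂ c.2).symm⟩

lemma glue_adj {x y : (glue G₁ G₂).V} (h : (glue G₁ G₂).G.Adj x y) :
    (∃ a b, x = Sum.inl a ∧ y = Sum.inl b ∧ G₁.G.Adj a b) ∨
      ∃ a b, x = emb2 G₁ G₂ a ∧ y = emb2 G₁ G₂ b ∧ G₂.G.Adj a b := by
  obtain ⟨-, h | h⟩ := (SimpleGraph.fromRel_adj _ _ _).mp h
  · exact h
  · rcases h with ⟨a, b, hx, hy, hab⟩ | ⟨a, b, hx, hy, hab⟩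
    · exact .inl ⟨b, a, hy, hx, hab.symm⟩
    · exact .inr ⟨b, a, hy, hx, hab.symm⟩

lemma glue_lab {x : (glue G₁ G₂).V} {ℓ : X} (h : ℓ ∈ (glue G₁ G₂).lab x) :
    (∃ a, x = Sum.inl a ∧ ℓ ∈ G₁.lab a) ∨ ∃ b, x = emb2 G₁ G₂ b ∧ ℓ ∈ G₂.lab b :=
  h

end Glue

section Summand

/-- `e` embeds `P` into `H` the way each summand embeds into a `⊕`-sum. -/
structure IsSummand (P H : BLGraph X t) (e : P.V → H.V) : Prop where
  injective : Function.Injective e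
  bd_eq : ∀ a, H.bd (e a) = P.bd a
  adj : ∀ {a b}, P.G.Adj a b → H.G.Adj (e a) (e b)
  lab : ∀ {a ℓ}, ℓ ∈ P.lab a → ℓ ∈ H.lab (e a)
  exists_adj : ∀ {a y}, a ∈ P.interior → H.G.Adj (e a) y → ∃ b, y = e b ∧ P.G.Adj a b
  lab_of_interior : ∀ {a ℓ}, a ∈ P.interior → ℓ ∈ H.lab (e a) → ℓ ∈ P.lab a

variable {G₁ G₂ : BLGraph X t}

lemma isSummand_inl : IsSummand G₁ (glue G₁ G₂) Sum.inl where
  injective := Sum.inl_injective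
  bd_eq _ := rfl
  adj {a b} h := (SimpleGraph.fromRel_adj _ _ _).mpr
    ⟨fun he => h.ne (Sum.inl_injective he), .inl (.inl ⟨a, b, rfl, rfl, h⟩)⟩
  lab {a _} h := .inl ⟨a, rfl, h⟩
  exists_adj {a y} ha h := by
    rcases glue_adj G₁ G₂ h with ⟨a', b, hx, rfl, hab⟩ | ⟨a', b, hx, -, -⟩
    · exact ⟨b, rfl, Sum.inl_injective hx ▸ hab⟩
    · obtain ⟨i, -, hai⟩ := (emb2_eq_inl_iff G₁ G₂).mp hx.symm
      simp_all
  lab_of_interior {a ℓ} ha h := by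
    rcases glue_lab G₁ G₂ h with ⟨a', hx, hl⟩ | ⟨b, hx, -⟩
    · exact Sum.inl_injective hx ▸ hl
    · obtain ⟨i, -, hai⟩ := (emb2_eq_inl_iff G₁ G₂).mp hx.symm
      simp_all

lemma isSummand_emb2 : IsSummand G₂ (glue G₁ G₂) (emb2 G₁ G₂) where
  injective := emb2_injective G₁ G₂
  bd_eq := glue_bd_emb2 G₁ G₂
  adj {a b} h := (SimpleGraph.fromRel_adj _ _ _).mpr
    ⟨fun he => h.ne (emb2_injective G₁ G₂ he), .inl (.inr ⟨a, b, rfl, rfl, h⟩)⟩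
  lab {b _} h := .inr ⟨b, rfl, h⟩
  exists_adj {b y} hb h := by
    rcases glue_adj G₁ G₂ h with ⟨a, -, hx, -, -⟩ | ⟨b', c, hx, rfl, hbc⟩
    · obtain ⟨i, hbi, -⟩ := (emb2_eq_inl_iff G₁ G₂).mp hx
      simp_all
    · exact ⟨c, rfl, emb2_injective G₁ G₂ hx ▸ hbc⟩
  lab_of_interior {b ℓ} hb h := by
    rcases glue_lab G₁ G₂ h with ⟨a, hx, -⟩ | ⟨b', hx, hl⟩
    · obtain ⟨i, hbi, -⟩ := (emb2_eq_inl_iff G₁ G₂).mp hx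
      simp_all
    · exact emb2_injective G₁ G₂ hx ▸ hl

lemma interior_glue {x : (glue G₁ G₂).V} (hx : (glue G₁ G₂).bd x = none) :
    x ∈ Sum.inl '' G₁.interior ∨ x ∈ emb2 G₁ G₂ '' G₂.interior := by
  rcases glue_cases G₁ G₂ x with ⟨a, rfl⟩ | ⟨b, rfl⟩
  · exact .inl ⟨a, hx, rfl⟩
  · exact .inr ⟨b, (glue_bd_emb2 G₁ G₂ b).symm.trans hx, rfl⟩

lemma inl_notMem_image_emb2_interior (a : G₁.V) :
    (Sum.inl a : (glue G₁ G₂).V) ∉ emb2 G₁ G₂ '' G₂.interior := by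
  rintro ⟨b, hb, he⟩
  obtain ⟨i, hbi, -⟩ := (emb2_eq_inl_iff G₁ G₂).mp he
  simp_all

end Summand

section Model

def RealizesAdj (P : BLGraph X t) {α : Type} (e : P.V → α) (S S' : Set α) : Prop :=
  ∃ a b, P.G.Adj a b ∧ e a ∈ S ∧ e b ∈ S'

def RealizesLab (P : BLGraph X t) {α : Type} (e : P.V → α) (S : Set α) (ℓ : X) : Prop :=
  ∃ a, e a ∈ S ∧ ℓ ∈ P.lab a

lemma RealizesAdj.symm {P : BLGraph X t} {α : Type} {e : P.V → α} {S S' : Set α}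
    (h : RealizesAdj P e S S') : RealizesAdj P e S' S :=
  let ⟨a, b, hab, ha, hb⟩ := h
  ⟨b, a, hab.symm, hb, ha⟩

namespace BMinorModel

variable {K W : BLGraph X t} {φ : K.V → Set W.V}

lemma nonempty (hφ : BMinorModel K W φ) (w : K.V) : (φ w).Nonempty := hφ.1.1 w

lemma connected (hφ : BMinorModel K W φ) (w : K.V) : (W.G.induce (φ w)).Connected :=
  hφ.1.2.1 w

lemma disjoint (hφ : BMinorModel K W φ) {w w' : K.V} (h : w ≠ w') : Disjoint (φ w) (φ w') :=
  hφ.1.2.2.1 w w' h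

lemma exists_adj (hφ : BMinorModel K W φ) {w w' : K.V} (h : K.G.Adj w w') :
    ∃ y ∈ φ w, ∃ y' ∈ φ w', W.G.Adj y y' :=
  hφ.1.2.2.2 w w' h

lemma exists_lab (hφ : BMinorModel K W φ) {w : K.V} {ℓ : X} (h : ℓ ∈ K.lab w) :
    ∃ y ∈ φ w, ℓ ∈ W.lab y :=
  hφ.2.1 w ℓ h

lemma bd_of_mem (hφ : BMinorModel K W φ) {w : K.V} {y : W.V} {i : Fin t} (hy : y ∈ φ w)
    (h : W.bd y = some i) : K.bd w = some i :=
  hφ.2.2.1 w y hy i h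

lemma exists_bd_mem (hφ : BMinorModel K W φ) {w : K.V} {i : Fin t} (h : K.bd w = some i) :
    ∃ y ∈ φ w, W.bd y = some i :=
  hφ.2.2.2 w i h

lemma mem_of_bd (hφ : BMinorModel K W φ) {w : K.V} {y : W.V} {i : Fin t}
    (hw : K.bd w = some i) (hy : W.bd y = some i) : y ∈ φ w := by
  obtain ⟨z, hz, hzi⟩ := hφ.exists_bd_mem hw
  exact W.inj y z i hy hzi ▸ hz

lemma bd_eq_none_of_mem (hφ : BMinorModel K W φ) {w : K.V} {y : W.V} (hw : K.bd w = none)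
    (hy : y ∈ φ w) : W.bd y = none := by
  rcases h : W.bd y with _ | i
  · rfl
  · simpa [hw] using hφ.bd_of_mem hy h

lemma bd_eq_none_of_ne (hφ : BMinorModel K W φ) {w : K.V} {y y' : W.V} {i : Fin t}
    (hy : y ∈ φ w) (hi : W.bd y = some i) (hy' : y' ∈ φ w) (hne : y' ≠ y) : W.bd y' = none := by
  rcases h : W.bd y' with _ | j
  · rfl
  · have hij := bd_eq_of_eq_some (hφ.bd_of_mem hy hi) (hφ.bd_of_mem hy' h)
    exact absurd (W.inj y' y i (hij ▸ h) hi) hne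

end BMinorModel

namespace IsSummand

open SimpleGraph

variable {P K W : BLGraph X t} {e : P.V → W.V} {φ : K.V → Set W.V}

lemma image_connected (he : IsSummand P W e) {S : Set P.V} (hS : (P.G.induce S).Connected) :
    (W.G.induce (e '' S)).Connected :=
  induce_image_connected e hS fun _ _ _ _ h => he.adj h

lemma subset_interior_of_mem (he : IsSummand P W e) (hφ : BMinorModel K W φ) {w : K.V}
    {a : P.V} (hw : K.bd w = none) (ha : e a ∈ φ w) (ha' : a ∈ P.interior) :
    φ w ⊆ e '' P.interior := by
  intro z hz
  by_contra hzn
  obtain ⟨_, -, d, hd, ⟨c, hc, rfl⟩, hdn, hcd⟩ :=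
    exists_boundary_adj_of_induce_connected (T := e '' P.interior) (hφ.connected w) ha hz
      ⟨a, ha', rfl⟩ hzn
  obtain ⟨d, rfl, -⟩ := he.exists_adj hc hcd
  exact hdn ⟨d, (he.bd_eq d).symm.trans (hφ.bd_eq_none_of_mem hw hd), rfl⟩

/-- A connected branch set can only leave the summand `P` through a boundary vertex of `P`,
whose index is then `i`. -/
lemma exists_bd_of_mem (he : IsSummand P W e) (hφ : BMinorModel K W φ) {w : K.V} {a : P.V}
    {i : Fin t} (hw : K.bd w = some i) (ha : e a ∈ φ w) : ∃ b, P.bd b = some i := by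
  obtain ⟨z, hz, hzi⟩ := hφ.exists_bd_mem hw
  by_cases hzr : z ∈ Set.range e
  · obtain ⟨b, rfl⟩ := hzr
    exact ⟨b, (he.bd_eq b).symm.trans hzi⟩
  obtain ⟨_, hc, d, -, ⟨c, rfl⟩, hdn, hcd⟩ :=
    exists_boundary_adj_of_induce_connected (T := Set.range e) (hφ.connected w) ha hz
      ⟨a, rfl⟩ hzr
  rcases hcb : P.bd c with _ | j
  · obtain ⟨d, rfl, -⟩ := he.exists_adj hcb hcd
    exact absurd ⟨d, rfl⟩ hdn
  · have hj := hφ.bd_of_mem hc ((he.bd_eq c).trans hcb)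
    exact ⟨c, bd_eq_of_eq_some hj hw ▸ hcb⟩

lemma preimage_connected (he : IsSummand P W e) (hφ : BMinorModel K W φ) {w : K.V}
    (hne : (e ⁻¹' φ w).Nonempty) : (P.G.induce (e ⁻¹' φ w)).Connected := by
  obtain ⟨a₀, ha₀, hint⟩ : ∃ a₀, e a₀ ∈ φ w ∧ ∀ y ∈ φ w, y ≠ e a₀ → W.bd y = none := by
    rcases hw : K.bd w with _ | i
    · exact ⟨hne.some, hne.some_mem, fun y hy _ => hφ.bd_eq_none_of_mem hw hy⟩
    · obtain ⟨b, hb⟩ := he.exists_bd_of_mem hφ hw hne.some_mem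
      have hbi : W.bd (e b) = some i := (he.bd_eq b).trans hb
      exact ⟨b, hφ.mem_of_bd hw hbi, fun y hy => hφ.bd_eq_none_of_ne (hφ.mem_of_bd hw hbi) hbi hy⟩
  have hint' : ∀ a, e a ∈ φ w → a ≠ a₀ → a ∈ P.interior := fun a ha hne =>
    (he.bd_eq a).symm.trans (hint _ ha (he.injective.ne hne))
  have hcut : (W.G.induce (φ w ∩ Set.range e)).Connected := by
    refine induce_inter_connected (hφ.connected w) ha₀ ⟨a₀, rfl⟩ ?_
    rintro _ hx y - ⟨x, rfl⟩ hne hxy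
    obtain ⟨z, rfl, -⟩ := he.exists_adj (hint' x hx fun h => hne (h ▸ rfl)) hxy
    exact ⟨z, rfl⟩
  refine induce_connected_of_image e he.injective.injOn
    (by rwa [Set.image_preimage_eq_inter_range]) fun a ha b hb hab => ?_
  by_cases ha₀' : a = a₀
  · obtain ⟨c, hc, hbc⟩ := he.exists_adj (hint' b hb fun h => hab.ne (by rw [ha₀', h])) hab.symm
    exact (he.injective hc) ▸ hbc.symm
  · obtain ⟨c, hc, hac⟩ := he.exists_adj (hint' a ha ha₀') hab
    exact (he.injective hc) ▸ hac

lemma realizesAdj_of_subset (he : IsSummand P W e) (hφ : BMinorModel K W φ) {w w' : K.V}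
    (hsub : φ w ⊆ e '' P.interior) (h : K.G.Adj w w') : RealizesAdj P e (φ w) (φ w') := by
  obtain ⟨y, hy, y', hy', hyy'⟩ := hφ.exists_adj h
  obtain ⟨a, ha, rfl⟩ := hsub hy
  obtain ⟨b, rfl, hab⟩ := he.exists_adj ha hyy'
  exact ⟨a, b, hab, hy, hy'⟩

lemma realizesLab_of_subset (he : IsSummand P W e) (hφ : BMinorModel K W φ) {w : K.V} {ℓ : X}
    (hsub : φ w ⊆ e '' P.interior) (h : ℓ ∈ K.lab w) : RealizesLab P e (φ w) ℓ := by
  obtain ⟨y, hy, hl⟩ := hφ.exists_lab h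
  obtain ⟨a, ha, rfl⟩ := hsub hy
  exact ⟨a, hy, he.lab_of_interior ha hl⟩

end IsSummand

namespace BMinorModel

variable {GA GB K : BLGraph X t} {φ : K.V → Set (glue GA GB).V}

lemma subset_interior_glue (hφ : BMinorModel K (glue GA GB) φ) {w : K.V}
    (hw : K.bd w = none) :
    φ w ⊆ Sum.inl '' GA.interior ∨ φ w ⊆ emb2 GA GB '' GB.interior := by
  obtain ⟨y, hy⟩ := hφ.nonempty w
  rcases interior_glue (hφ.bd_eq_none_of_mem hw hy) with ⟨a, ha, rfl⟩ | ⟨b, hb, rfl⟩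
  · exact .inl (isSummand_inl.subset_interior_of_mem hφ hw hy ha)
  · exact .inr (isSummand_emb2.subset_interior_of_mem hφ hw hy hb)

lemma exists_bd_glue (hφ : BMinorModel K (glue GA GB) φ) {w : K.V} {i : Fin t}
    (hw : K.bd w = some i) : (∃ a, GA.bd a = some i) ∨ ∃ b, GB.bd b = some i := by
  obtain ⟨z, -, hz⟩ := hφ.exists_bd_mem hw
  rcases glue_cases GA GB z with ⟨a, rfl⟩ | ⟨b, rfl⟩
  exacts [.inl ⟨a, hz⟩, .inr ⟨b, (glue_bd_emb2 GA GB b).symm.trans hz⟩]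

lemma realizesAdj_glue (hφ : BMinorModel K (glue GA GB) φ) {w w' : K.V} (h : K.G.Adj w w') :
    RealizesAdj GA Sum.inl (φ w) (φ w') ∨ RealizesAdj GB (emb2 GA GB) (φ w) (φ w') := by
  obtain ⟨y, hy, y', hy', hyy'⟩ := hφ.exists_adj h
  rcases glue_adj GA GB hyy' with ⟨a, b, rfl, rfl, hab⟩ | ⟨a, b, rfl, rfl, hab⟩
  exacts [.inl ⟨a, b, hab, hy, hy'⟩, .inr ⟨a, b, hab, hy, hy'⟩]

lemma realizesLab_glue (hφ : BMinorModel K (glue GA GB) φ) {w : K.V} {ℓ : X}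
    (h : ℓ ∈ K.lab w) :
    RealizesLab GA Sum.inl (φ w) ℓ ∨ RealizesLab GB (emb2 GA GB) (φ w) ℓ := by
  obtain ⟨y, hy, hl⟩ := hφ.exists_lab h
  rcases glue_lab GA GB hl with ⟨a, rfl, ha⟩ | ⟨b, rfl, hb⟩
  exacts [.inl ⟨a, hy, ha⟩, .inr ⟨b, hy, hb⟩]

end BMinorModel

end Model

section Decomposition

/-- `K` as the `⊕`-sum of the pieces in `L`. Boundary vertices of different pieces carrying the
same index are identified in `K`, interior vertices are not. -/
structure SumDecomp (K : BLGraph X t) (L : List (BLGraph X t)) where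
  ι : ∀ p ∈ L, p.V → K.V
  exists_eq_ι : ∀ x, ∃ p hp v, x = ι p hp v
  bd_ι : ∀ p hp v, K.bd (ι p hp v) = p.bd v
  adj_iff : ∀ x y, K.G.Adj x y ↔ ∃ p hp v v', x = ι p hp v ∧ y = ι p hp v' ∧ p.G.Adj v v'
  lab_iff : ∀ x ℓ, ℓ ∈ K.lab x ↔ ∃ p hp v, x = ι p hp v ∧ ℓ ∈ p.lab v
  eq_of_ι_eq : ∀ p hp v v', v ∈ p.interior → ι p hp v = ι p hp v' → v = v'
  ι_ne : ∀ p hp v p' hp' v', v ∈ p.interior → p ≠ p' → ι p hp v ≠ ι p' hp' v'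

namespace SumDecomp

def single (P : BLGraph X t) : SumDecomp P [P] where
  ι p hp := cast (congrArg V (List.mem_singleton.mp hp))
  exists_eq_ι x := ⟨P, List.mem_singleton_self P, x, rfl⟩
  bd_ι p hp v := by
    obtain rfl := List.mem_singleton.mp hp
    rfl
  adj_iff x y := by
    refine ⟨fun h => ⟨P, List.mem_singleton_self P, x, y, rfl, rfl, h⟩, ?_⟩
    rintro ⟨p, hp, v, v', rfl, rfl, h⟩
    obtain rfl := List.mem_singleton.mp hp
    exact h
  lab_iff x ℓ := by
    refine ⟨fun h => ⟨P, List.mem_singleton_self P, x, rfl, h⟩, ?_⟩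
    rintro ⟨p, hp, v, rfl, h⟩
    obtain rfl := List.mem_singleton.mp hp
    exact h
  eq_of_ι_eq p hp v v' _ h := by
    obtain rfl := List.mem_singleton.mp hp
    exact h
  ι_ne p hp v p' hp' v' _ hne := by
    obtain rfl := List.mem_singleton.mp hp
    exact absurd (List.mem_singleton.mp hp').symm hne

variable {R P : BLGraph X t} {M : List (BLGraph X t)}

open Classical in
noncomputable def consι (ρ : SumDecomp R M) (P : BLGraph X t) :
    ∀ p ∈ P :: M, p.V → (glue P R).V :=
  fun p hp v => if h : p = P then Sum.inl (cast (congrArg V h) v)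
    else emb2 P R (ρ.ι p ((List.mem_cons.mp hp).resolve_left h) v)

lemma consι_self (ρ : SumDecomp R M) (hp : P ∈ P :: M) (v : P.V) :
    consι ρ P P hp v = Sum.inl v :=
  dif_pos rfl

lemma consι_of_mem (ρ : SumDecomp R M) (hP : P ∉ M) {p : BLGraph X t} (hp : p ∈ M)
    (hp' : p ∈ P :: M) (v : p.V) : consι ρ P p hp' v = emb2 P R (ρ.ι p hp v) :=
  dif_neg (ne_of_mem_of_not_mem hp hP)

lemma consι_adj_iff (ρ : SumDecomp R M) (hP : P ∉ M) (x y : (glue P R).V) :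
    (glue P R).G.Adj x y ↔
      ∃ p hp v v', x = consι ρ P p hp v ∧ y = consι ρ P p hp v' ∧ p.G.Adj v v' := by
  constructor
  · intro h
    rcases glue_adj P R h with ⟨a, b, rfl, rfl, hab⟩ | ⟨a, b, rfl, rfl, hab⟩
    · exact ⟨P, List.mem_cons_self, a, b, (consι_self ρ _ a).symm, (consι_self ρ _ b).symm, hab⟩
    · obtain ⟨p, hp, v, v', rfl, rfl, hvv'⟩ := (ρ.adj_iff a b).mp hab
      exact ⟨p, List.mem_cons_of_mem _ hp, v, v', (consι_of_mem ρ hP hp _ v).symm,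
        (consι_of_mem ρ hP hp _ v').symm, hvv'⟩
  · rintro ⟨p, hp, v, v', rfl, rfl, hvv'⟩
    rcases List.mem_cons.mp hp with rfl | hp
    · rw [consι_self, consι_self]
      exact isSummand_inl.adj hvv'
    · rw [consι_of_mem ρ hP hp, consι_of_mem ρ hP hp]
      exact isSummand_emb2.adj ((ρ.adj_iff _ _).mpr ⟨p, hp, v, v', rfl, rfl, hvv'⟩)

lemma consι_lab_iff (ρ : SumDecomp R M) (hP : P ∉ M) (x : (glue P R).V) (ℓ : X) :
    ℓ ∈ (glue P R).lab x ↔ ∃ p hp v, x = consι ρ P p hp v ∧ ℓ ∈ p.lab v := by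
  constructor
  · intro h
    rcases glue_lab P R h with ⟨a, rfl, hl⟩ | ⟨b, rfl, hl⟩
    · exact ⟨P, List.mem_cons_self, a, (consι_self ρ _ a).symm, hl⟩
    · obtain ⟨p, hp, v, rfl, hv⟩ := (ρ.lab_iff b ℓ).mp hl
      exact ⟨p, List.mem_cons_of_mem _ hp, v, (consι_of_mem ρ hP hp _ v).symm, hv⟩
  · rintro ⟨p, hp, v, rfl, hv⟩
    rcases List.mem_cons.mp hp with rfl | hp
    · rw [consι_self]
      exact isSummand_inl.lab hv
    · rw [consι_of_mem ρ hP hp]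
      exact isSummand_emb2.lab ((ρ.lab_iff _ _).mpr ⟨p, hp, v, rfl, hv⟩)

lemma consι_ne (ρ : SumDecomp R M) (hP : P ∉ M) {p p' : BLGraph X t} (hp : p ∈ P :: M)
    (hp' : p' ∈ P :: M) {v : p.V} (v' : p'.V) (hv : v ∈ p.interior) (hne : p ≠ p') :
    consι ρ P p hp v ≠ consι ρ P p' hp' v' := by
  rcases List.mem_cons.mp hp with rfl | hpM <;> rcases List.mem_cons.mp hp' with rfl | hpM'
  · exact absurd rfl hne
  · rw [consι_self, consι_of_mem ρ hP hpM']
    intro h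
    obtain ⟨i, -, hi⟩ := (emb2_eq_inl_iff _ _).mp h.symm
    simp_all
  · rw [consι_of_mem ρ hP hpM, consι_self]
    intro h
    obtain ⟨i, hi, -⟩ := (emb2_eq_inl_iff _ _).mp h
    simp_all [ρ.bd_ι]
  · rw [consι_of_mem ρ hP hpM, consι_of_mem ρ hP hpM']
    exact fun h => ρ.ι_ne p hpM v p' hpM' v' hv hne (emb2_injective _ _ h)

noncomputable def cons (ρ : SumDecomp R M) (P : BLGraph X t) (hP : P ∉ M) :
    SumDecomp (glue P R) (P :: M) where
  ι := consι ρ P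
  exists_eq_ι x := by
    rcases glue_cases P R x with ⟨a, rfl⟩ | ⟨b, rfl⟩
    · exact ⟨P, List.mem_cons_self, a, (consι_self ρ _ a).symm⟩
    · obtain ⟨p, hp, v, rfl⟩ := ρ.exists_eq_ι b
      exact ⟨p, List.mem_cons_of_mem _ hp, v, (consι_of_mem ρ hP hp _ v).symm⟩
  bd_ι p hp v := by
    rcases List.mem_cons.mp hp with rfl | hp
    · rw [consι_self]
      rfl
    · rw [consι_of_mem ρ hP hp, glue_bd_emb2, ρ.bd_ι]
  adj_iff := consι_adj_iff ρ hP
  lab_iff := consι_lab_iff ρ hP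
  eq_of_ι_eq p hp v v' hv h := by
    rcases List.mem_cons.mp hp with rfl | hp
    · rw [consι_self, consι_self] at h
      exact Sum.inl_injective h
    · rw [consι_of_mem ρ hP hp, consι_of_mem ρ hP hp] at h
      exact ρ.eq_of_ι_eq p hp v v' hv (emb2_injective P R h)
  ι_ne p hp v p' hp' v' hv hne := consι_ne ρ hP hp hp' v' hv hne

end SumDecomp

noncomputable def sumDecompGlueList :
    ∀ (l : List (BLGraph X t)) (P : BLGraph X t), (P :: l).Nodup →
      SumDecomp (glueList P l) (P :: l)
  | [], P, _ => SumDecomp.single P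
  | Q :: l, P, h => (sumDecompGlueList l Q (List.nodup_cons.mp h).2).cons P
      (List.nodup_cons.mp h).1

end Decomposition

section Pieces

variable {H p : BLGraph X t}

lemma pieceEdge_adj {a b : H.V} {hne : a ≠ b} {v v' : (pieceEdge H a b hne).V} :
    (pieceEdge H a b hne).G.Adj v v' ↔ v ≠ v' ∧ (v = true ∧ v' = false ∨ v' = true ∧ v = false) :=
  SimpleGraph.fromRel_adj _ _ _

lemma pieceComp_adj {c : H.V} {v v' : (pieceComp H c).V} :
    (pieceComp H c).G.Adj v v' ↔ v ≠ v' ∧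
      (H.G.Adj v.1 v'.1 ∧ (H.bd v.1 = none ∨ H.bd v'.1 = none) ∨
        H.G.Adj v'.1 v.1 ∧ (H.bd v'.1 = none ∨ H.bd v.1 = none)) :=
  SimpleGraph.fromRel_adj _ _ _

lemma exists_bd_of_mem_pcs (hp : p ∈ pcs H) {v : p.V} {i : Fin t} (hv : p.bd v = some i) :
    ∃ a, H.bd a = some i := by
  rcases hp with ⟨a, _, rfl⟩ | ⟨a, ℓ, _, _, rfl⟩ | ⟨a, b, hne, _, _, _, rfl⟩ | ⟨c, _, rfl⟩
  · exact ⟨a, hv⟩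
  · exact ⟨a, hv⟩
  · cases v
    exacts [⟨b, hv⟩, ⟨a, hv⟩]
  · exact ⟨v.1, hv⟩

lemma eq_pieceComp_of_mem_interior (hp : p ∈ pcs H) {u : p.V} (hu : u ∈ p.interior) :
    ∃ c, H.bd c = none ∧ p = pieceComp H c := by
  rcases hp with ⟨a, ha, rfl⟩ | ⟨a, ℓ, ha, _, rfl⟩ | ⟨a, b, hne, ha, hb, _, rfl⟩ | ⟨c, hc, rfl⟩
  · exact absurd hu ha
  · exact absurd hu ha
  · cases u
    exacts [absurd hu hb, absurd hu ha]
  · exact ⟨c, hc, rfl⟩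

lemma mem_interior_or_of_adj (hp : p ∈ pcs H) {u : p.V} (hu : u ∈ p.interior) {v v' : p.V}
    (h : p.G.Adj v v') : v ∈ p.interior ∨ v' ∈ p.interior := by
  obtain ⟨c, -, rfl⟩ := eq_pieceComp_of_mem_interior hp hu
  rcases (pieceComp_adj.mp h).2 with ⟨-, h⟩ | ⟨-, h⟩
  exacts [h, h.symm]

lemma mem_interior_of_lab (hp : p ∈ pcs H) {u : p.V} (hu : u ∈ p.interior) {v : p.V} {ℓ : X}
    (h : ℓ ∈ p.lab v) : v ∈ p.interior := by
  obtain ⟨c, -, rfl⟩ := eq_pieceComp_of_mem_interior hp hu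
  exact h.1

lemma exists_adj_interior (hp : p ∈ pcs H) {u : p.V} (hu : u ∈ p.interior) {v : p.V}
    (hv : v ∉ p.interior) : ∃ v' ∈ p.interior, p.G.Adj v v' := by
  obtain ⟨c, -, rfl⟩ := eq_pieceComp_of_mem_interior hp hu
  rcases v with ⟨x, hx | ⟨hxbd, y, hy, hxy⟩⟩
  · exact absurd hx.1 hv
  · refine ⟨⟨y, .inl hy⟩, hy.1, pieceComp_adj.mpr ⟨fun h => ?_, .inl ⟨hxy, .inr hy.1⟩⟩⟩
    have hxy : x = y := congrArg Subtype.val h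
    exact hxbd (hxy ▸ hy.1)

lemma induce_interior_preconnected (hp : p ∈ pcs H) :
    (p.G.induce p.interior).Preconnected := by
  rintro ⟨u, hu⟩ ⟨u', hu'⟩
  obtain ⟨c, hc, rfl⟩ := eq_pieceComp_of_mem_interior hp hu
  set A : Set H.V := {y | H.bd y = none}
  have reach : ∀ x y, (within H.G A).Walk x y → ∀ (hx : x ∈ compIn H.G A c)
      (hy : y ∈ compIn H.G A c), ((pieceComp H c).G.induce (pieceComp H c).interior).Reachable
        ⟨⟨x, .inl hx⟩, hx.1⟩ ⟨⟨y, .inl hy⟩, hy.1⟩ := by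
    intro x y p
    induction p with
    | nil => exact fun _ _ => .rfl
    | @cons x z _ hxz _ ih =>
      intro hx hy
      obtain ⟨hxA, hzA, hxz'⟩ := hxz
      have hz : z ∈ compIn H.G A c := ⟨hzA, hx.2.trans (SimpleGraph.Adj.reachable ⟨hxA, hzA, hxz'⟩)⟩
      have hadj : ((pieceComp H c).G.induce (pieceComp H c).interior).Adj
          ⟨⟨x, .inl hx⟩, hx.1⟩ ⟨⟨z, .inl hz⟩, hz.1⟩ :=
        pieceComp_adj.mpr ⟨fun h => hxz'.ne (congrArg Subtype.val h), .inl ⟨hxz', .inl hxA⟩⟩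
      exact hadj.reachable.trans (ih hz hy)
  rcases u with ⟨x, hx | ⟨hxbd, -⟩⟩
  swap
  · exact absurd hu hxbd
  rcases u' with ⟨y, hy | ⟨hybd, -⟩⟩
  swap
  · exact absurd hu' hybd
  obtain ⟨px⟩ := hx.2
  obtain ⟨py⟩ := hy.2
  have hc : c ∈ compIn H.G A c := ⟨hc, .rfl⟩
  exact (reach c x px hc hx).symm.trans (reach c y py hc hy)

lemma eq_pieceEdge_of_adj (hp : p ∈ pcs H) {v v' : p.V} (h : p.G.Adj v v')
    (hv : v ∉ p.interior) (hv' : v' ∉ p.interior) : ∃ a b hne, p = pieceEdge H a b hne := by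
  rcases hp with ⟨a, -, rfl⟩ | ⟨a, ℓ, -, -, rfl⟩ | ⟨a, b, hne, -, -, -, rfl⟩ | ⟨c, -, rfl⟩
  · exact absurd h (SimpleGraph.bot_adj _ _).mp
  · exact absurd h (SimpleGraph.bot_adj _ _).mp
  · exact ⟨a, b, hne, rfl⟩
  · rcases (pieceComp_adj.mp h).2 with ⟨-, h | h⟩ | ⟨-, h | h⟩
    exacts [absurd h hv, absurd h hv', absurd h hv', absurd h hv]

lemma eq_or_eq_of_adj (hp : p ∈ pcs H) {v v' : p.V} (h : p.G.Adj v v') (hv : v ∉ p.interior)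
    (hv' : v' ∉ p.interior) (u : p.V) : u = v ∨ u = v' := by
  obtain ⟨a, b, hne, rfl⟩ := eq_pieceEdge_of_adj hp h hv hv'
  have hvv := (pieceEdge_adj.mp h).1
  cases u <;> cases v <;> cases v' <;>
    first | exact .inl rfl | exact .inr rfl | exact absurd rfl hvv

lemma adj_eq_of_adj (hp : p ∈ pcs H) {v v' : p.V} (h : p.G.Adj v v') (hv : v ∉ p.interior)
    (hv' : v' ∉ p.interior) {u u' : p.V} (h' : p.G.Adj u u') :
    u = v ∧ u' = v' ∨ u = v' ∧ u' = v := by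
  obtain ⟨a, b, hne, rfl⟩ := eq_pieceEdge_of_adj hp h hv hv'
  have hvv := (pieceEdge_adj.mp h).1
  have huu := (pieceEdge_adj.mp h').1
  cases u <;> cases u' <;> cases v <;> cases v' <;>
    first
    | exact .inl ⟨rfl, rfl⟩
    | exact .inr ⟨rfl, rfl⟩
    | exact absurd rfl hvv
    | exact absurd rfl huu

lemma eq_pieceLab_of_lab (hp : p ∈ pcs H) {v : p.V} {ℓ : X} (hv : v ∉ p.interior)
    (hl : ℓ ∈ p.lab v) : ∃ a, p = pieceLab H a ℓ := by
  rcases hp with ⟨a, -, rfl⟩ | ⟨a, ℓ, -, -, rfl⟩ | ⟨a, b, hne, -, -, -, rfl⟩ | ⟨c, -, rfl⟩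
  · exact absurd hl (Set.notMem_empty ℓ)
  · exact ⟨a, (Set.mem_singleton_iff.mp hl) ▸ rfl⟩
  · exact absurd hl (Set.notMem_empty ℓ)
  · exact absurd hl.1 hv

lemma eq_of_lab (hp : p ∈ pcs H) {v : p.V} {ℓ : X} (hv : v ∉ p.interior) (hl : ℓ ∈ p.lab v)
    (u : p.V) : u = v := by
  obtain ⟨a, rfl⟩ := eq_pieceLab_of_lab hp hv hl
  rfl

lemma lab_eq_of_lab (hp : p ∈ pcs H) {v : p.V} {ℓ : X} (hv : v ∉ p.interior)
    (hl : ℓ ∈ p.lab v) {u : p.V} {ℓ' : X} (hl' : ℓ' ∈ p.lab u) : ℓ' = ℓ := by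
  obtain ⟨a, rfl⟩ := eq_pieceLab_of_lab hp hv hl
  exact hl'

lemma not_adj_of_lab (hp : p ∈ pcs H) {v : p.V} {ℓ : X} (hv : v ∉ p.interior)
    (hl : ℓ ∈ p.lab v) (u u' : p.V) : ¬ p.G.Adj u u' := by
  obtain ⟨a, rfl⟩ := eq_pieceLab_of_lab hp hv hl
  exact (SimpleGraph.bot_adj _ _).mp

end Pieces

section PiecesNeedingB

variable {GA GB H K p : BLGraph X t} {L : List (BLGraph X t)}

/-- The piece `p` of `K` cannot be modelled inside `GA` alone. -/
def NeedsB (ρ : SumDecomp K L) (φ : K.V → Set (glue GA GB).V) (p : BLGraph X t) : Prop :=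
  ∃ hp : p ∈ L,
    (∃ v ∈ p.interior, ¬ φ (ρ.ι p hp v) ⊆ Sum.inl '' GA.interior) ∨
    (∃ v v', p.G.Adj v v' ∧ v ∉ p.interior ∧ v' ∉ p.interior ∧
      ¬ RealizesAdj GA Sum.inl (φ (ρ.ι p hp v)) (φ (ρ.ι p hp v'))) ∨
    (∃ v ℓ, v ∉ p.interior ∧ ℓ ∈ p.lab v ∧ ¬ RealizesLab GA Sum.inl (φ (ρ.ι p hp v)) ℓ)

variable {ρ : SumDecomp K L} {φ : K.V → Set (glue GA GB).V}

lemma needsB_of_subset (hφ : BMinorModel K (glue GA GB) φ) (hp : p ∈ L) {v : p.V}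
    (hv : v ∈ p.interior) (hB : φ (ρ.ι p hp v) ⊆ emb2 GA GB '' GB.interior) :
    NeedsB ρ φ p := by
  refine ⟨hp, .inl ⟨v, hv, fun hA => ?_⟩⟩
  obtain ⟨y, hy⟩ := hφ.nonempty (ρ.ι p hp v)
  obtain ⟨a, -, rfl⟩ := hA hy
  exact inl_notMem_image_emb2_interior a (hB hy)

namespace NeedsB

/-- One interior branch set of `p` lies in the interior of `GB`, hence all of them do, since the
interior of a piece is connected. -/
lemma subset_interior (hL : ∀ q ∈ L, q ∈ pcs H) (hφ : BMinorModel K (glue GA GB) φ)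
    (hN : NeedsB ρ φ p) {v : p.V} (hv : v ∈ p.interior) :
    φ (ρ.ι p hN.1 v) ⊆ emb2 GA GB '' GB.interior := by
  obtain ⟨hp, ⟨u, hu, hnA⟩ | ⟨u, u', huu, hu, hu', -⟩ | ⟨u, ℓ, hu, hl, -⟩⟩ := hN
  · have hside : ∀ v ∈ p.interior, φ (ρ.ι p hp v) ⊆ Sum.inl '' GA.interior ∨
        φ (ρ.ι p hp v) ⊆ emb2 GA GB '' GB.interior :=
      fun v hv => hφ.subset_interior_glue ((ρ.bd_ι p hp v).trans hv)
    obtain ⟨walk⟩ := induce_interior_preconnected (hL p hp) ⟨u, hu⟩ ⟨v, hv⟩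
    by_contra hvB
    obtain ⟨d, -, hd, hd'⟩ := walk.exists_boundary_dart
      {c | φ (ρ.ι p hp c.1) ⊆ emb2 GA GB '' GB.interior}
      ((hside u hu).resolve_left hnA) hvB
    have hK : K.G.Adj (ρ.ι p hp d.fst.1) (ρ.ι p hp d.snd.1) :=
      (ρ.adj_iff _ _).mpr ⟨p, hp, _, _, rfl, rfl, d.adj⟩
    obtain ⟨b, b', -, hb, hb'⟩ := isSummand_emb2.realizesAdj_of_subset hφ hd hK
    have hbint : b' ∈ GB.interior := (glue_bd_emb2 GA GB b').symm.trans
      (hφ.bd_eq_none_of_mem ((ρ.bd_ι p hp _).trans d.snd.2) hb')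
    exact hd' (isSummand_emb2.subset_interior_of_mem hφ ((ρ.bd_ι p hp _).trans d.snd.2) hb'
      hbint)
  · rcases mem_interior_or_of_adj (hL p hp) hv huu with h | h
    exacts [absurd h hu, absurd h hu']
  · exact absurd (mem_interior_of_lab (hL p hp) hv hl) hu

lemma realizesAdj (hL : ∀ q ∈ L, q ∈ pcs H) (hφ : BMinorModel K (glue GA GB) φ)
    (hN : NeedsB ρ φ p) {v v' : p.V} (h : p.G.Adj v v') :
    RealizesAdj GB (emb2 GA GB) (φ (ρ.ι p hN.1 v)) (φ (ρ.ι p hN.1 v')) := by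
  have hK : K.G.Adj (ρ.ι p hN.1 v) (ρ.ι p hN.1 v') :=
    (ρ.adj_iff _ _).mpr ⟨p, hN.1, v, v', rfl, rfl, h⟩
  by_cases hv : v ∈ p.interior
  · exact isSummand_emb2.realizesAdj_of_subset hφ (hN.subset_interior hL hφ hv) hK
  by_cases hv' : v' ∈ p.interior
  · exact (isSummand_emb2.realizesAdj_of_subset hφ (hN.subset_interior hL hφ hv') hK.symm).symm
  refine (hφ.realizesAdj_glue hK).resolve_left fun hA => ?_
  obtain ⟨hp, ⟨u, hu, -⟩ | ⟨u, u', huu, -, -, hnA⟩ | ⟨u, ℓ, hu, hl, -⟩⟩ := id hN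
  · rcases mem_interior_or_of_adj (hL p hp) hu h with h | h
    exacts [hv h, hv' h]
  · rcases adj_eq_of_adj (hL p hp) h hv hv' huu with ⟨rfl, rfl⟩ | ⟨rfl, rfl⟩
    exacts [hnA hA, hnA hA.symm]
  · exact not_adj_of_lab (hL p hp) hu hl v v' h

lemma realizesLab (hL : ∀ q ∈ L, q ∈ pcs H) (hφ : BMinorModel K (glue GA GB) φ)
    (hN : NeedsB ρ φ p) {v : p.V} {ℓ : X} (h : ℓ ∈ p.lab v) :
    RealizesLab GB (emb2 GA GB) (φ (ρ.ι p hN.1 v)) ℓ := by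
  have hK : ℓ ∈ K.lab (ρ.ι p hN.1 v) := (ρ.lab_iff _ _).mpr ⟨p, hN.1, v, rfl, h⟩
  by_cases hv : v ∈ p.interior
  · exact isSummand_emb2.realizesLab_of_subset hφ (hN.subset_interior hL hφ hv) hK
  refine (hφ.realizesLab_glue hK).resolve_left fun hA => ?_
  obtain ⟨hp, ⟨u, hu, -⟩ | ⟨u, u', huu, -, -, -⟩ | ⟨u, ℓ', -, hl', hnA⟩⟩ := id hN
  · exact hv (mem_interior_of_lab (hL p hp) hu h)
  · exact not_adj_of_lab (hL p hp) hv h u u' huu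
  · obtain rfl := eq_of_lab (hL p hp) hv h u
    obtain rfl := lab_eq_of_lab (hL p hp) hv h hl'
    exact hnA hA

lemma exists_emb2_mem (hL : ∀ q ∈ L, q ∈ pcs H) (hφ : BMinorModel K (glue GA GB) φ)
    (hN : NeedsB ρ φ p) (v : p.V) : ∃ b, emb2 GA GB b ∈ φ (ρ.ι p hN.1 v) := by
  by_cases hv : v ∈ p.interior
  · obtain ⟨y, hy⟩ := hφ.nonempty (ρ.ι p hN.1 v)
    obtain ⟨b, -, rfl⟩ := hN.subset_interior hL hφ hv hy
    exact ⟨b, hy⟩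
  obtain ⟨hp, ⟨u, hu, -⟩ | ⟨u, u', huu, hu, hu', -⟩ | ⟨u, ℓ, hu, hl, -⟩⟩ := id hN
  · obtain ⟨v', -, hvv'⟩ := exists_adj_interior (hL p hp) hu hv
    obtain ⟨b, -, -, hb, -⟩ := hN.realizesAdj hL hφ hvv'
    exact ⟨b, hb⟩
  · rcases eq_or_eq_of_adj (hL p hp) huu hu hu' v with rfl | rfl
    · obtain ⟨b, -, -, hb, -⟩ := hN.realizesAdj hL hφ huu
      exact ⟨b, hb⟩
    · obtain ⟨-, b, -, -, hb⟩ := hN.realizesAdj hL hφ huu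
      exact ⟨b, hb⟩
  · obtain rfl := eq_of_lab (hL p hp) hu hl v
    obtain ⟨b, hb, -⟩ := hN.realizesLab hL hφ hl
    exact ⟨b, hb⟩

lemma exists_bd (hL : ∀ q ∈ L, q ∈ pcs H) (hφ : BMinorModel K (glue GA GB) φ)
    (hN : NeedsB ρ φ p) {v : p.V} {i : Fin t} (hv : p.bd v = some i) :
    ∃ b, GB.bd b = some i := by
  obtain ⟨b, hb⟩ := hN.exists_emb2_mem hL hφ v
  exact isSummand_emb2.exists_bd_of_mem hφ ((ρ.bd_ι p hN.1 v).trans hv) hb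

end NeedsB

lemma realizesAdj_of_not_needsB (hφ : BMinorModel K (glue GA GB) φ) (hN : ¬ NeedsB ρ φ p)
    (hp : p ∈ L) {v v' : p.V} (h : p.G.Adj v v') :
    RealizesAdj GA Sum.inl (φ (ρ.ι p hp v)) (φ (ρ.ι p hp v')) := by
  have hK : K.G.Adj (ρ.ι p hp v) (ρ.ι p hp v') := (ρ.adj_iff _ _).mpr ⟨p, hp, v, v', rfl, rfl, h⟩
  by_cases hv : v ∈ p.interior
  · refine isSummand_inl.realizesAdj_of_subset hφ ?_ hK
    exact by_contra fun hA => hN ⟨hp, .inl ⟨v, hv, hA⟩⟩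
  by_cases hv' : v' ∈ p.interior
  · refine (isSummand_inl.realizesAdj_of_subset hφ ?_ hK.symm).symm
    exact by_contra fun hA => hN ⟨hp, .inl ⟨v', hv', hA⟩⟩
  exact by_contra fun hA => hN ⟨hp, .inr (.inl ⟨v, v', h, hv, hv', hA⟩)⟩

lemma realizesLab_of_not_needsB (hφ : BMinorModel K (glue GA GB) φ) (hN : ¬ NeedsB ρ φ p)
    (hp : p ∈ L) {v : p.V} {ℓ : X} (h : ℓ ∈ p.lab v) :
    RealizesLab GA Sum.inl (φ (ρ.ι p hp v)) ℓ := by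
  by_cases hv : v ∈ p.interior
  · refine isSummand_inl.realizesLab_of_subset hφ ?_ ((ρ.lab_iff _ _).mpr ⟨p, hp, v, rfl, h⟩)
    exact by_contra fun hA => hN ⟨hp, .inl ⟨v, hv, hA⟩⟩
  exact by_contra fun hA => hN ⟨hp, .inr (.inr ⟨v, ℓ, hv, h, hA⟩)⟩

end PiecesNeedingB

section Transfer

variable {GA GB GB' H K PB p : BLGraph X t} {L LB : List (BLGraph X t)}
  {ρ : SumDecomp K L} {ρB : SumDecomp PB LB} {φ : K.V → Set (glue GA GB).V}
  {ψ : PB.V → Set GB'.V}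

/-- `LB` lists the pieces of the part of `K` that the model `φ` places in `GB`. -/
structure IsBPart (H : BLGraph X t) (ρ : SumDecomp K L) (φ : K.V → Set (glue GA GB).V)
    (LB : List (BLGraph X t)) : Prop where
  mem_pcs : ∀ q ∈ L, q ∈ pcs H
  model : BMinorModel K (glue GA GB) φ
  cases_of_mem : ∀ q ∈ LB, NeedsB ρ φ q ∨
    ∃ a i, H.bd a = some i ∧ (∃ w, K.bd w = some i) ∧ (∃ b, GB.bd b = some i) ∧ q = pieceBd H a
  mem_of_needsB : ∀ q, NeedsB ρ φ q → q ∈ LB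
  exists_pieceBd_mem : ∀ i, (∃ w, K.bd w = some i) → (∃ b, GB.bd b = some i) →
    ∃ a, H.bd a = some i ∧ pieceBd H a ∈ LB

def Link (ρ : SumDecomp K L) (ρB : SumDecomp PB LB) (x : PB.V) (w : K.V) : Prop :=
  PB.bd x = K.bd w ∧ (PB.bd x = none → ∃ p hB hL v, x = ρB.ι p hB v ∧ w = ρ.ι p hL v)

lemma link_ι (hB : p ∈ LB) (hL : p ∈ L) (v : p.V) : Link ρ ρB (ρB.ι p hB v) (ρ.ι p hL v) :=
  ⟨(ρB.bd_ι p hB v).trans (ρ.bd_ι p hL v).symm, fun _ => ⟨p, hB, hL, v, rfl, rfl⟩⟩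

lemma link_of_bd {x : PB.V} {w : K.V} {i : Fin t} (hx : PB.bd x = some i)
    (hw : K.bd w = some i) : Link ρ ρB x w :=
  ⟨hx.trans hw.symm, fun h => absurd (hx.symm.trans h) (Option.some_ne_none i)⟩

namespace Link

lemma eq_right {x : PB.V} {w w' : K.V} (h : Link ρ ρB x w) (h' : Link ρ ρB x w') : w = w' := by
  rcases hx : PB.bd x with _ | i
  · obtain ⟨p, hB, hL, v, rfl, rfl⟩ := h.2 hx
    obtain ⟨p', hB', hL', v', hxe, rfl⟩ := h'.2 hx
    have hv : v ∈ p.interior := (ρB.bd_ι p hB v).symm.trans hx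
    obtain rfl : p = p' := by_contra fun hne => ρB.ι_ne p hB v p' hB' v' hv hne hxe
    rw [ρB.eq_of_ι_eq p hB v v' hv hxe]
  · exact K.inj w w' i (h.1.symm.trans hx) (h'.1.symm.trans hx)

lemma eq_left {x x' : PB.V} {w : K.V} (h : Link ρ ρB x w) (h' : Link ρ ρB x' w) : x = x' := by
  rcases hw : K.bd w with _ | i
  · obtain ⟨p, hB, hL, v, rfl, rfl⟩ := h.2 (h.1.trans hw)
    obtain ⟨p', hB', hL', v', rfl, hwe⟩ := h'.2 (h'.1.trans hw)
    have hv : v ∈ p.interior := (ρ.bd_ι p hL v).symm.trans hw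
    obtain rfl : p = p' := by_contra fun hne => ρ.ι_ne p hL v p' hL' v' hv hne hwe
    rw [ρ.eq_of_ι_eq p hL v v' hv hwe]
  · exact PB.inj x x' i (h.1.trans hw) (h'.1.trans hw)

end Link

namespace IsBPart

lemma needsB_of_mem (hS : IsBPart H ρ φ LB) (hB : p ∈ LB) (hp : ∀ a, p ≠ pieceBd H a) :
    NeedsB ρ φ p :=
  (hS.cases_of_mem p hB).resolve_right fun ⟨a, _, _, _, _, he⟩ => hp a he

lemma needsB_of_mem_interior (hS : IsBPart H ρ φ LB) (hB : p ∈ LB) {v : p.V}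
    (hv : v ∈ p.interior) : NeedsB ρ φ p := by
  rcases hS.cases_of_mem p hB with hN | ⟨a, i, hai, -, -, rfl⟩
  · exact hN
  · exact absurd (hai.symm.trans hv) (Option.some_ne_none i)

lemma bd_shared_of_bd (hS : IsBPart H ρ φ LB) (ρB : SumDecomp PB LB) {x : PB.V} {i : Fin t}
    (hx : PB.bd x = some i) :
    (∃ w, K.bd w = some i) ∧ ∃ b, GB.bd b = some i := by
  obtain ⟨p, hB, v, rfl⟩ := ρB.exists_eq_ι x
  rw [ρB.bd_ι] at hx
  rcases hS.cases_of_mem p hB with hN | ⟨a, j, haj, hK, hGB, rfl⟩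
  · exact ⟨⟨ρ.ι p hN.1 v, (ρ.bd_ι p hN.1 v).trans hx⟩, hN.exists_bd hS.mem_pcs hS.model hx⟩
  · obtain rfl : j = i := bd_eq_of_eq_some haj hx
    exact ⟨hK, hGB⟩

lemma exists_link (hS : IsBPart H ρ φ LB) (ρB : SumDecomp PB LB) (x : PB.V) :
    ∃ w, Link ρ ρB x w := by
  rcases hx : PB.bd x with _ | i
  · obtain ⟨p, hB, v, rfl⟩ := ρB.exists_eq_ι x
    have hv : v ∈ p.interior := (ρB.bd_ι p hB v).symm.trans hx
    exact ⟨_, link_ι hB (hS.needsB_of_mem_interior hB hv).1 v⟩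
  · obtain ⟨⟨w, hw⟩, -⟩ := hS.bd_shared_of_bd ρB hx
    exact ⟨w, link_of_bd hx hw⟩

lemma subset_interior_of_link (hS : IsBPart H ρ φ LB) {x : PB.V} {w : K.V}
    (h : Link ρ ρB x w) (hw : K.bd w = none) : φ w ⊆ emb2 GA GB '' GB.interior := by
  obtain ⟨p, hB, hL, v, rfl, rfl⟩ := h.2 (h.1.trans hw)
  have hv : v ∈ p.interior := (ρ.bd_ι p hL v).symm.trans hw
  exact (hS.needsB_of_mem_interior hB hv).subset_interior hS.mem_pcs hS.model hv

lemma exists_bd_of_shared (hS : IsBPart H ρ φ LB) (ρB : SumDecomp PB LB) {w : K.V} {i : Fin t}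
    (hw : K.bd w = some i) (hGB : ∃ b, GB.bd b = some i) : ∃ x, PB.bd x = some i := by
  obtain ⟨a, hai, hmem⟩ := hS.exists_pieceBd_mem i ⟨w, hw⟩ hGB
  exact ⟨ρB.ι _ hmem PUnit.unit, (ρB.bd_ι _ hmem _).trans hai⟩

end IsBPart

def traceB (ρ : SumDecomp K L) (ρB : SumDecomp PB LB) (φ : K.V → Set (glue GA GB).V) :
    PB.V → Set GB.V :=
  fun x => {b | ∃ w, Link ρ ρB x w ∧ emb2 GA GB b ∈ φ w}

lemma traceB_eq {x : PB.V} {w : K.V} (h : Link ρ ρB x w) :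
    traceB ρ ρB φ x = emb2 GA GB ⁻¹' φ w :=
  Set.ext fun _ => ⟨fun ⟨_, h', hb⟩ => h'.eq_right h ▸ hb, fun hb => ⟨w, h, hb⟩⟩

namespace IsBPart

lemma traceB_nonempty (hS : IsBPart H ρ φ LB) (ρB : SumDecomp PB LB) (x : PB.V) :
    (traceB ρ ρB φ x).Nonempty := by
  obtain ⟨w, hxw⟩ := hS.exists_link ρB x
  rw [traceB_eq hxw]
  rcases hw : K.bd w with _ | i
  · obtain ⟨y, hy⟩ := hS.model.nonempty w
    obtain ⟨b, -, rfl⟩ := hS.subset_interior_of_link hxw hw hy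
    exact ⟨b, hy⟩
  · obtain ⟨-, b, hb⟩ := hS.bd_shared_of_bd ρB (hxw.1.trans hw)
    exact ⟨b, hS.model.mem_of_bd hw ((glue_bd_emb2 GA GB b).trans hb)⟩

theorem traceB_model (hS : IsBPart H ρ φ LB) (ρB : SumDecomp PB LB) :
    BMinorModel PB GB (traceB ρ ρB φ) := by
  have hφ := hS.model
  refine ⟨⟨hS.traceB_nonempty ρB, fun x => ?_, fun x x' hxx' => ?_, fun x y hxy => ?_⟩,
    fun x ℓ hl => ?_, fun x b hb i hbi => ?_, fun x i hx => ?_⟩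
  · obtain ⟨w, hxw⟩ := hS.exists_link ρB x
    have hne := hS.traceB_nonempty ρB x
    rw [traceB_eq hxw] at hne ⊢
    exact isSummand_emb2.preimage_connected hφ hne
  · obtain ⟨w, hxw⟩ := hS.exists_link ρB x
    obtain ⟨w', hxw'⟩ := hS.exists_link ρB x'
    rw [traceB_eq hxw, traceB_eq hxw']
    exact (hφ.disjoint fun h => hxx' (hxw.eq_left (by rwa [h]))).preimage _
  · obtain ⟨p, hB, v, v', rfl, rfl, hvv'⟩ := (ρB.adj_iff x y).mp hxy
    have hN := hS.needsB_of_mem hB fun a he => by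
      subst he
      exact (SimpleGraph.bot_adj _ _).mp hvv'
    obtain ⟨b, b', hbb', hb, hb'⟩ := hN.realizesAdj hS.mem_pcs hφ hvv'
    rw [traceB_eq (link_ι hB hN.1 v), traceB_eq (link_ι hB hN.1 v')]
    exact ⟨b, hb, b', hb', hbb'⟩
  · obtain ⟨p, hB, v, rfl, hlv⟩ := (ρB.lab_iff x ℓ).mp hl
    have hN := hS.needsB_of_mem hB fun a he => by
      subst he
      exact Set.notMem_empty ℓ hlv
    obtain ⟨b, hb, hlb⟩ := hN.realizesLab hS.mem_pcs hφ hlv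
    rw [traceB_eq (link_ι hB hN.1 v)]
    exact ⟨b, hb, hlb⟩
  · obtain ⟨w, hxw⟩ := hS.exists_link ρB x
    rw [traceB_eq hxw] at hb
    exact hxw.1.trans (hφ.bd_of_mem hb ((glue_bd_emb2 GA GB b).trans hbi))
  · obtain ⟨⟨w, hw⟩, b, hb⟩ := hS.bd_shared_of_bd ρB hx
    rw [traceB_eq (link_of_bd hx hw)]
    exact ⟨b, hφ.mem_of_bd hw ((glue_bd_emb2 GA GB b).trans hb), hb⟩

end IsBPart

def reassembly (ρ : SumDecomp K L) (ρB : SumDecomp PB LB) (φ : K.V → Set (glue GA GB).V)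
    (ψ : PB.V → Set GB'.V) : K.V → Set (glue GA GB').V :=
  fun w => Sum.inl '' (Sum.inl ⁻¹' φ w) ∪ emb2 GA GB' '' {b | ∃ x, Link ρ ρB x w ∧ b ∈ ψ x}

namespace IsBPart

lemma reassembly_nonempty (hS : IsBPart H ρ φ LB) (hψ : BMinorModel PB GB' ψ) (w : K.V) :
    (reassembly ρ ρB φ ψ w).Nonempty := by
  rcases hw : K.bd w with _ | i
  · rcases hS.model.subset_interior_glue hw with hA | hB
    · obtain ⟨y, hy⟩ := hS.model.nonempty w
      obtain ⟨a, -, rfl⟩ := hA hy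
      exact ⟨_, .inl ⟨a, hy, rfl⟩⟩
    · obtain ⟨p, hp, v, rfl⟩ := ρ.exists_eq_ι w
      have hB' := hS.mem_of_needsB p
        (needsB_of_subset hS.model hp ((ρ.bd_ι p hp v).symm.trans hw) hB)
      obtain ⟨b, hb⟩ := hψ.nonempty (ρB.ι p hB' v)
      exact ⟨_, .inr ⟨b, ⟨_, link_ι hB' hp v, hb⟩, rfl⟩⟩
  · rcases hS.model.exists_bd_glue hw with ⟨a, ha⟩ | hGB
    · exact ⟨_, .inl ⟨a, hS.model.mem_of_bd hw ha, rfl⟩⟩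
    · obtain ⟨x, hx⟩ := hS.exists_bd_of_shared ρB hw hGB
      obtain ⟨b, hb, -⟩ := hψ.exists_bd_mem hx
      exact ⟨_, .inr ⟨b, ⟨x, link_of_bd hx hw, hb⟩, rfl⟩⟩

lemma reassembly_connected (hS : IsBPart H ρ φ LB) (hψ : BMinorModel PB GB' ψ) (w : K.V) :
    ((glue GA GB').G.induce (reassembly ρ ρB φ ψ w)).Connected := by
  have hφ := hS.model
  refine SimpleGraph.induce_union_connected_of_nonempty (fun hA => ?_) (fun hB => ?_)
    (fun hA hB => ?_) (hS.reassembly_nonempty hψ w)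
  · exact isSummand_inl.image_connected
      (isSummand_inl.preimage_connected hφ (Set.image_nonempty.mp hA))
  · obtain ⟨b, x, hxw, -⟩ := Set.image_nonempty.mp hB
    have hx : {b | ∃ x, Link ρ ρB x w ∧ b ∈ ψ x} = ψ x :=
      Set.ext fun _ => ⟨fun ⟨_, h, hb⟩ => h.eq_left hxw ▸ hb, fun hb => ⟨x, hxw, hb⟩⟩
    rw [hx]
    exact isSummand_emb2.image_connected (hψ.connected x)
  · -- both parts are nonempty only at a boundary vertex, and they meet in its index-`i` vertex
    obtain ⟨a, ha⟩ := Set.image_nonempty.mp hA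
    obtain ⟨b, x, hxw, -⟩ := Set.image_nonempty.mp hB
    obtain ⟨i, hw⟩ : ∃ i, K.bd w = some i := Option.ne_none_iff_exists'.mp fun hw =>
      inl_notMem_image_emb2_interior a (hS.subset_interior_of_link hxw hw ha)
    obtain ⟨a', ha'⟩ := isSummand_inl.exists_bd_of_mem hφ hw ha
    obtain ⟨b', hb', hb'i⟩ := hψ.exists_bd_mem (hxw.1.trans hw)
    exact ⟨Sum.inl a', ⟨a', hφ.mem_of_bd hw ha', rfl⟩, b', ⟨x, hxw, hb'⟩,
      emb2_of_bd_eq GA GB' hb'i ha'⟩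

lemma eq_of_emb2_eq_inl (hS : IsBPart H ρ φ LB) (hψ : BMinorModel PB GB' ψ) {w w' : K.V}
    {a : GA.V} {b : GB'.V} {x : PB.V} (ha : Sum.inl a ∈ φ w) (hb : b ∈ ψ x)
    (hxw : Link ρ ρB x w') (he : emb2 GA GB' b = Sum.inl a) : w = w' := by
  obtain ⟨j, hbj, haj⟩ := (emb2_eq_inl_iff GA GB').mp he
  exact K.inj w w' j (hS.model.bd_of_mem ha haj) (hxw.1.symm.trans (hψ.bd_of_mem hb hbj))

lemma reassembly_disjoint (hS : IsBPart H ρ φ LB) (hψ : BMinorModel PB GB' ψ) {w w' : K.V}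
    (hne : w ≠ w') : Disjoint (reassembly ρ ρB φ ψ w) (reassembly ρ ρB φ ψ w') := by
  rw [Set.disjoint_left]
  rintro _ (⟨a, ha, rfl⟩ | ⟨b, ⟨x, hxw, hb⟩, rfl⟩) (⟨a', ha', he⟩ | ⟨b', ⟨x', hxw', hb'⟩, he⟩)
  · obtain rfl := Sum.inl_injective he
    exact Set.disjoint_left.mp (hS.model.disjoint hne) ha ha'
  · exact hne (hS.eq_of_emb2_eq_inl hψ ha hb' hxw' he)
  · exact hne (hS.eq_of_emb2_eq_inl hψ ha' hb hxw he.symm).symm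
  · obtain rfl := emb2_injective GA GB' he
    obtain rfl : x = x' := by_contra fun hxx => Set.disjoint_left.mp (hψ.disjoint hxx) hb hb'
    exact hne (hxw.eq_right hxw')

lemma reassembly_exists_adj (hS : IsBPart H ρ φ LB) (hψ : BMinorModel PB GB' ψ) {w w' : K.V}
    (h : K.G.Adj w w') :
    ∃ z ∈ reassembly ρ ρB φ ψ w, ∃ z' ∈ reassembly ρ ρB φ ψ w', (glue GA GB').G.Adj z z' := by
  obtain ⟨p, hp, v, v', rfl, rfl, hvv'⟩ := (ρ.adj_iff w w').mp h
  by_cases hN : NeedsB ρ φ p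
  · have hB := hS.mem_of_needsB p hN
    obtain ⟨b, hb, b', hb', hbb'⟩ :=
      hψ.exists_adj ((ρB.adj_iff _ _).mpr ⟨p, hB, v, v', rfl, rfl, hvv'⟩)
    exact ⟨_, .inr ⟨b, ⟨_, link_ι hB hp v, hb⟩, rfl⟩, _, .inr ⟨b', ⟨_, link_ι hB hp v', hb'⟩, rfl⟩,
      isSummand_emb2.adj hbb'⟩
  · obtain ⟨a, a', haa', ha, ha'⟩ := realizesAdj_of_not_needsB hS.model hN hp hvv'
    exact ⟨_, .inl ⟨a, ha, rfl⟩, _, .inl ⟨a', ha', rfl⟩, isSummand_inl.adj haa'⟩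

lemma reassembly_exists_lab (hS : IsBPart H ρ φ LB) (hψ : BMinorModel PB GB' ψ) {w : K.V}
    {ℓ : X} (h : ℓ ∈ K.lab w) : ∃ z ∈ reassembly ρ ρB φ ψ w, ℓ ∈ (glue GA GB').lab z := by
  obtain ⟨p, hp, v, rfl, hlv⟩ := (ρ.lab_iff w ℓ).mp h
  by_cases hN : NeedsB ρ φ p
  · have hB := hS.mem_of_needsB p hN
    obtain ⟨b, hb, hlb⟩ := hψ.exists_lab ((ρB.lab_iff _ _).mpr ⟨p, hB, v, rfl, hlv⟩)
    exact ⟨_, .inr ⟨b, ⟨_, link_ι hB hp v, hb⟩, rfl⟩, isSummand_emb2.lab hlb⟩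
  · obtain ⟨a, ha, hla⟩ := realizesLab_of_not_needsB hS.model hN hp hlv
    exact ⟨_, .inl ⟨a, ha, rfl⟩, isSummand_inl.lab hla⟩

lemma reassembly_exists_bd_mem (hS : IsBPart H ρ φ LB) (hψ : BMinorModel PB GB' ψ) {w : K.V}
    {i : Fin t} (hw : K.bd w = some i) :
    ∃ z ∈ reassembly ρ ρB φ ψ w, (glue GA GB').bd z = some i := by
  rcases hS.model.exists_bd_glue hw with ⟨a, ha⟩ | hGB
  · exact ⟨_, .inl ⟨a, hS.model.mem_of_bd hw ha, rfl⟩, ha⟩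
  · obtain ⟨x, hx⟩ := hS.exists_bd_of_shared ρB hw hGB
    obtain ⟨b, hb, hbi⟩ := hψ.exists_bd_mem hx
    exact ⟨_, .inr ⟨b, ⟨x, link_of_bd hx hw, hb⟩, rfl⟩, (glue_bd_emb2 GA GB' b).trans hbi⟩

theorem reassembly_model (hS : IsBPart H ρ φ LB) (hψ : BMinorModel PB GB' ψ) :
    BMinorModel K (glue GA GB') (reassembly ρ ρB φ ψ) := by
  refine ⟨⟨hS.reassembly_nonempty hψ, hS.reassembly_connected hψ,
    fun _ _ => hS.reassembly_disjoint hψ, fun _ _ => hS.reassembly_exists_adj hψ⟩,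
    fun _ _ => hS.reassembly_exists_lab hψ, ?_, fun _ _ => hS.reassembly_exists_bd_mem hψ⟩
  rintro w _ (⟨a, ha, rfl⟩ | ⟨b, ⟨x, hxw, hb⟩, rfl⟩) j hj
  · exact hS.model.bd_of_mem ha hj
  · exact hxw.1.symm.trans (hψ.bd_of_mem hb ((glue_bd_emb2 GA GB' b).symm.trans hj))

end IsBPart

end Transfer

section Folio

def empty (X : Type) (t : ℕ) : BLGraph X t where
  V := PEmpty
  G := ⊥
  lab _ := ∅
  bd _ := none
  inj a := a.elim

def SumDecomp.nil : SumDecomp (empty X t) [] where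
  ι _ hp := absurd hp List.not_mem_nil
  exists_eq_ι x := x.elim
  bd_ι _ hp := absurd hp List.not_mem_nil
  adj_iff x := x.elim
  lab_iff x := x.elim
  eq_of_ι_eq _ hp := absurd hp List.not_mem_nil
  ι_ne _ hp := absurd hp List.not_mem_nil

lemma bMinorModel_empty (G : BLGraph X t) : BMinorModel (empty X t) G PEmpty.elim :=
  ⟨⟨fun w => w.elim, fun w => w.elim, fun w => w.elim, fun w => w.elim⟩, fun w => w.elim,
    fun w => w.elim, fun w => w.elim⟩

variable {GA GB H K : BLGraph X t} {L LB : List (BLGraph X t)} {φ : K.V → Set (glue GA GB).V}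

lemma IsBPart.mem_pcs_of_mem {ρ : SumDecomp K L} (hS : IsBPart H ρ φ LB) {q : BLGraph X t}
    (hq : q ∈ LB) : q ∈ pcs H := by
  rcases hS.cases_of_mem q hq with hN | ⟨a, i, hai, -, -, rfl⟩
  · exact hS.mem_pcs q hN.1
  · exact .inl ⟨a, hai ▸ Option.some_ne_none i, rfl⟩

open Classical in
lemma exists_isBPart (ρ : SumDecomp K L) (hL : ∀ q ∈ L, q ∈ pcs H)
    (hφ : BMinorModel K (glue GA GB) φ) : ∃ LB, LB.Nodup ∧ IsBPart H ρ φ LB := by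
  let shared (i : Fin t) : Prop :=
    ∃ a, H.bd a = some i ∧ (∃ w, K.bd w = some i) ∧ ∃ b, GB.bd b = some i
  let bdPieces := (List.finRange t).filterMap fun i =>
    if h : shared i then some (pieceBd H h.choose) else none
  refine ⟨(bdPieces ++ L.filter (NeedsB ρ φ ·)).dedup, List.nodup_dedup _,
    ⟨hL, hφ, fun q hq => ?_, fun q hN => ?_, fun i ⟨w, hw⟩ hGB => ?_⟩⟩
  · rcases List.mem_append.mp (List.mem_dedup.mp hq) with hq | hq
    · obtain ⟨i, -, hi⟩ := List.mem_filterMap.mp hq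
      split_ifs at hi with h
      obtain rfl := Option.some_injective _ hi
      exact .inr ⟨_, i, h.choose_spec.1, h.choose_spec.2.1, h.choose_spec.2.2, rfl⟩
    · exact .inl (of_decide_eq_true (List.mem_filter.mp hq).2)
  · exact List.mem_dedup.mpr (List.mem_append_right _
      (List.mem_filter.mpr ⟨hN.1, decide_eq_true hN⟩))
  · obtain ⟨p, hp, v, rfl⟩ := ρ.exists_eq_ι w
    obtain ⟨a, ha⟩ := exists_bd_of_mem_pcs (hL p hp) ((ρ.bd_ι p hp v).symm.trans hw)
    have h : shared i := ⟨a, ha, ⟨_, hw⟩, hGB⟩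
    refine ⟨h.choose, h.choose_spec.1, List.mem_dedup.mpr (List.mem_append_left _ ?_)⟩
    exact List.mem_filterMap.mpr ⟨i, List.mem_finRange i, dif_pos h⟩

theorem folioQ_glue_subset {Q : Set (BLGraph X 0)} {GB' : BLGraph X t}
    (hsub : folioQ Q t GB ⊆ folioQ Q t GB') :
    folioQ Q t (glue GA GB) ⊆ folioQ Q t (glue GA GB') := by
  rintro _ ⟨hK, φ, hφ⟩
  refine ⟨hK, ?_⟩
  obtain ⟨H, hH, P, l, hL, hnd, rfl⟩ := hK
  let ρ := sumDecompGlueList l P hnd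
  obtain ⟨LB, hLB, hS⟩ := exists_isBPart ρ hL hφ
  rcases LB with _ | ⟨q, lB⟩
  · exact ⟨_, hS.reassembly_model (ρB := SumDecomp.nil) (bMinorModel_empty GB')⟩
  let ρB := sumDecompGlueList lB q hLB
  have hPB : glueList q lB ∈ mpcsPlus t Q :=
    ⟨H, hH, q, lB, fun _ hp => hS.mem_pcs_of_mem hp, hLB, rfl⟩
  obtain ⟨ψ, hψ⟩ := (hsub ⟨hPB, _, hS.traceB_model ρB⟩).2
  exact ⟨_, hS.reassembly_model (ρB := ρB) hψ⟩

end Folio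

end BLGraph

open BLGraph in
theorem stmt8_general {X : Type} {t : ℕ} (Q : Set (BLGraph X 0))
    (GA GB GB' : BLGraph X t) (h : folioQ Q t GB = folioQ Q t GB') :
    folioQ Q t (glue GA GB) = folioQ Q t (glue GA GB') :=
  (folioQ_glue_subset h.subset).antisymm (folioQ_glue_subset h.symm.subset)

open BLGraph in
/-- if two `t`-boundaried labeled graphs `GB`, `GB'` have the same
`folio_{Q,t}`, then so do `GA ⊕ GB` and `GA ⊕ GB'`. -/
theorem stmt8 {X : Type} {t : ℕ} (Q : Set (BLGraph X 0)) (hQ : ∀ q ∈ Q, q.G.Connected)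
    (GA GB GB' : BLGraph X t) (h : folioQ Q t GB = folioQ Q t GB') :
    folioQ Q t (glue GA GB) = folioQ Q t (glue GA GB') :=
  stmt8_general Q GA GB GB' h
end

section
/- For every n ≥ 1 there exist n pairwise incomparable (under the minor relation) biconnected planar graphs, each of size O(n); concretely, for each i ∈ {0,…,n−1} the graph B_i formed by a 2×(2i) grid and a 3×(n−i+1) grid sharing structure as two attached grids is biconnected, planar, and no B_i is a minor of B_j for i ≠ j. -/
open SimpleGraph Set

/-- Planarity, via Wagner's characterization: no `K₅` minor and no `K₃,₃` minor. -/
def IsPlanar {α : Type*} (G : SimpleGraph α) : Prop :=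
  ¬ IsMinor (⊤ : SimpleGraph (Fin 5)) G ∧
  ¬ IsMinor (completeBipartiteGraph (Fin 3) (Fin 3)) G

/-!
The graph `chordedCycle m c` is the cycle `0, 1, …, c + m + 2` with extra chords from `0` to
`2, …, c + 1`. It contains a Hamiltonian cycle, hence is biconnected. Deleting the vertex `0`
leaves a path, and a connected set of vertices of a path has at most two neighbours on it; so in
a minor model at most one branch set meets `0`, while both `K₅` and `K₃,₃` keep a vertex with
three neighbours after deleting any vertex. Hence the graph is planar.

Taking `B i = chordedCycle (3i) (2(n - i))`, the number of vertices `2n + i + 3` grows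
with `i` while the number of edges `4n - i + 3` decreases; since both numbers are monotone under
minors, no `B i` is a minor of another.
-/

section Minor

variable {α β : Type*} {G : SimpleGraph α} {H : SimpleGraph β}

theorem IsMinorModel.eq_of_mem {φ : β → Set α} (hφ : IsMinorModel G H φ) {x : α} {w w' : β}
    (hw : x ∈ φ w) (hw' : x ∈ φ w') : w = w' :=
  by_contra fun hne => Set.disjoint_left.mp (hφ.2.2.1 _ _ hne) hw hw'

theorem IsMinor.card_le [Finite α] (h : IsMinor H G) : Nat.card β ≤ Nat.card α := by
  obtain ⟨φ, hφ⟩ := h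
  choose f hf using hφ.1
  exact Nat.card_le_card_of_injective f fun w w' hww => hφ.eq_of_mem (hf w) (hww ▸ hf w')

theorem IsMinor.edgeSet_ncard_le [Finite α] (h : IsMinor H G) :
    H.edgeSet.ncard ≤ G.edgeSet.ncard := by
  obtain ⟨φ, hφ⟩ := h
  cases isEmpty_or_nonempty β
  · simp [Set.eq_empty_of_isEmpty H.edgeSet]
  classical
  -- contracting every branch set maps the edges of `G` onto a superset of the edges of `H`
  let branch : α → β := fun a => if h : ∃ w, a ∈ φ w then h.choose else Classical.arbitrary β
  have branch_eq {a : α} {w : β} (ha : a ∈ φ w) : branch a = w := by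
    have h : ∃ w, a ∈ φ w := ⟨w, ha⟩
    simp only [branch, dif_pos h]
    exact hφ.eq_of_mem h.choose_spec ha
  have hsub : H.edgeSet ⊆ Sym2.map branch '' G.edgeSet := by
    intro e he
    induction e using Sym2.ind with
    | _ w w' =>
      obtain ⟨a, ha, b, hb, hab⟩ := hφ.2.2.2 w w' he
      exact ⟨s(a, b), hab, by simp [branch_eq ha, branch_eq hb]⟩
  calc H.edgeSet.ncard ≤ (Sym2.map branch '' G.edgeSet).ncard :=
        ncard_le_ncard hsub (G.edgeSet.toFinite.image _)
    _ ≤ G.edgeSet.ncard := ncard_image_le G.edgeSet.toFinite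

end Minor

theorem IsBiconnected.mono {α : Type*} {G G' : SimpleGraph α} (hle : G ≤ G')
    (h : IsBiconnected G) : IsBiconnected G' :=
  ⟨h.1.mono hle, fun v => (h.2 v).mono (comap_monotone _ hle)⟩

theorem Fin.val_sub_eq_one {n : ℕ} {a b : Fin (n + 2)} (h : a - b = 1) :
    b.val + 1 = a.val ∨ (a.val = 0 ∧ b.val = n + 1) := by
  have := b.isLt
  rcases le_or_gt b a with hba | hab
  · have := Fin.coe_sub_iff_le.mpr hba
    rw [h, Fin.val_one] at this
    omega
  · have := Fin.coe_sub_iff_lt.mpr hab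
    rw [h, Fin.val_one] at this
    omega

theorem cycleGraph_induce_ne_connected (n : ℕ) (x : Fin (n + 2)) :
    ((cycleGraph (n + 2)).induce {u | u ≠ x}).Connected := by
  have hval (k : Fin (n + 1)) : (k.castSucc + 1).val = k.val + 1 :=
    Fin.val_add_one_of_lt k.castSucc_lt_last
  have hne (k : Fin (n + 1)) : x + (k.castSucc + 1) ≠ x := by
    rw [Ne, add_eq_left, Fin.ext_iff, hval, Fin.val_zero]
    exact Nat.succ_ne_zero _
  -- the path `x + 1, x + 2, …, x - 1` runs through all vertices but `x`
  let f : pathGraph (n + 1) →g (cycleGraph (n + 2)).induce {u | u ≠ x} :=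
    { toFun := fun k => ⟨x + (k.castSucc + 1), hne k⟩
      map_rel' := by
        intro k l hkl
        simp only [comap_adj, Function.Embedding.coe_subtype, cycleGraph_adj]
        rcases pathGraph_adj.mp hkl with h | h
        · right
          rw [show l.castSucc = k.castSucc + 1 from Fin.ext (by rw [hval]; exact h.symm)]
          abel
        · left
          rw [show k.castSucc = l.castSucc + 1 from Fin.ext (by rw [hval]; exact h.symm)]
          abel }
  refine (pathGraph_connected n).map f fun ⟨u, hu⟩ => ?_
  have hlast : u - x - 1 ≠ Fin.last (n + 1) := fun h =>
    hu (sub_eq_zero.mp (by rw [← sub_add_cancel (u - x) 1, h, Fin.last_add_one]))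
  refine ⟨(u - x - 1).castPred hlast, Subtype.ext ?_⟩
  show x + (((u - x - 1).castPred hlast).castSucc + 1) = u
  rw [Fin.castSucc_castPred]
  abel

theorem isBiconnected_cycleGraph (n : ℕ) : IsBiconnected (cycleGraph (n + 2)) :=
  ⟨cycleGraph_connected, cycleGraph_induce_ne_connected n⟩

theorem cycleGraph_edgeSet_eq_range (n : ℕ) :
    (cycleGraph (n + 2)).edgeSet = range fun k => s(k, k + 1) := by
  ext e
  induction e using Sym2.ind with
  | _ u w =>
    simp only [mem_edgeSet, cycleGraph_adj, mem_range]
    constructor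
    · rintro (h | h)
      · exact ⟨w, by rw [← h, add_sub_cancel, Sym2.eq_swap]⟩
      · exact ⟨u, by rw [← h, add_sub_cancel]⟩
    · rintro ⟨k, hk⟩
      rcases Sym2.eq_iff.mp hk with ⟨rfl, rfl⟩ | ⟨rfl, rfl⟩
      · exact Or.inr (add_sub_cancel_left _ _)
      · exact Or.inl (add_sub_cancel_left _ _)

theorem cycleGraph_edgeSet_ncard (n : ℕ) : (cycleGraph (n + 3)).edgeSet.ncard = n + 3 := by
  rw [cycleGraph_edgeSet_eq_range, ncard_range_of_injective, Nat.card_fin]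
  intro k l h
  rcases Sym2.eq_iff.mp h with ⟨h, -⟩ | ⟨rfl, h⟩
  · exact h
  · have h2 : (1 + 1 : Fin (n + 3)) = 0 := add_eq_left.mp ((add_assoc l 1 1).symm.trans h)
    rw [Fin.ext_iff, Fin.val_add, Fin.val_one, Nat.mod_eq_of_lt (by omega)] at h2
    simp at h2

section ApexOverPath

variable {α : Type*} {G : SimpleGraph α} {z : α} {pos : α → ℕ}

/-- `G - z` is a subgraph of a path, `pos` being the position along it. -/
def IsApexOverPath (G : SimpleGraph α) (z : α) (pos : α → ℕ) : Prop :=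
  Function.Injective pos ∧
    ∀ a b, a ≠ z → b ≠ z → G.Adj a b → pos a + 1 = pos b ∨ pos b + 1 = pos a

theorem IsApexOverPath.exists_mem_pos_eq_of_walk (hG : IsApexOverPath G z pos)
    {S : Set α} (hz : z ∉ S) {p q : S} (W : (G.induce S).Walk p q) {c : ℕ}
    (hc₁ : min (pos p) (pos q) ≤ c) (hc₂ : c ≤ max (pos p) (pos q)) : ∃ t ∈ S, pos t = c := by
  induction W with
  | @nil u => exact ⟨u, u.2, by omega⟩
  | @cons a b q hab W ih =>
    by_cases hcb : min (pos b) (pos q) ≤ c ∧ c ≤ max (pos b) (pos q)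
    · exact ih hcb.1 hcb.2
    · have := hG.2 a b (ne_of_mem_of_not_mem a.2 hz) (ne_of_mem_of_not_mem b.2 hz) hab
      exact ⟨a, a.2, by omega⟩

theorem IsApexOverPath.pos_eq_of_adj_of_preconnected (hG : IsApexOverPath G z pos)
    {S : Set α} (hz : z ∉ S) (hS : (G.induce S).Preconnected) {a b x y : α}
    (ha : a ∈ S) (hb : b ∈ S) (hmin : ∀ x ∈ S, pos a ≤ pos x) (hmax : ∀ x ∈ S, pos x ≤ pos b)
    (hx : x ∈ S) (hy : y ∉ S) (hyz : y ≠ z) (hxy : G.Adj x y) :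
    pos y + 1 = pos a ∨ pos y = pos b + 1 := by
  have hxa := hmin x hx
  have hxb := hmax x hx
  have hgap : ¬ (pos a ≤ pos y ∧ pos y ≤ pos b) := fun ⟨h₁, h₂⟩ => by
    obtain ⟨W⟩ := hS ⟨a, ha⟩ ⟨b, hb⟩
    obtain ⟨t, ht, hty⟩ :=
      hG.exists_mem_pos_eq_of_walk hz W (c := pos y) (by dsimp only; omega) (by dsimp only; omega)
    exact hy (hG.1 hty ▸ ht)
  have := hG.2 x y (ne_of_mem_of_not_mem hx hz) hyz hxy
  omega

theorem IsApexOverPath.not_isMinor [Finite α] (hG : IsApexOverPath G z pos) {β : Type*}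
    [Nonempty β] {H : SimpleGraph β}
    (hH : ∀ w₀, ∃ w t₁ t₂ t₃, w ≠ w₀ ∧ t₁ ≠ w₀ ∧ t₂ ≠ w₀ ∧ t₃ ≠ w₀ ∧ t₁ ≠ t₂ ∧ t₁ ≠ t₃ ∧
      t₂ ≠ t₃ ∧ H.Adj w t₁ ∧ H.Adj w t₂ ∧ H.Adj w t₃) :
    ¬ IsMinor H G := by
  rintro ⟨φ, hφ⟩
  obtain ⟨w₀, hw₀⟩ : ∃ w₀, ∀ w ≠ w₀, z ∉ φ w := by
    by_cases h : ∃ w₀, z ∈ φ w₀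
    · obtain ⟨w₀, hz⟩ := h
      exact ⟨w₀, fun w hw hz' => hw (hφ.eq_of_mem hz' hz)⟩
    · exact ⟨Classical.arbitrary β, fun w _ hz => h ⟨w, hz⟩⟩
  obtain ⟨w, t₁, t₂, t₃, hw, h₁, h₂, h₃, h₁₂, h₁₃, h₂₃, hadj₁, hadj₂, hadj₃⟩ := hH w₀
  obtain ⟨a, ha, hmin⟩ := (φ w).exists_min_image pos (φ w).toFinite (hφ.1 w)
  obtain ⟨b, hb, hmax⟩ := (φ w).exists_max_image pos (φ w).toFinite (hφ.1 w)
  have hneighbour (t : β) (ht : t ≠ w₀) (hwt : H.Adj w t) :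
      ∃ y ∈ φ t, pos y + 1 = pos a ∨ pos y = pos b + 1 := by
    obtain ⟨x, hx, y, hy, hxy⟩ := hφ.2.2.2 w t hwt
    refine ⟨y, hy, hG.pos_eq_of_adj_of_preconnected (hw₀ w hw) (hφ.2.1 w).preconnected ha hb hmin hmax hx (fun hyw => hwt.ne (hφ.eq_of_mem hyw hy)) ?_ hxy⟩
    rintro rfl
    exact hw₀ t ht hy
  obtain ⟨y₁, hy₁, hp₁⟩ := hneighbour t₁ h₁ hadj₁
  obtain ⟨y₂, hy₂, hp₂⟩ := hneighbour t₂ h₂ hadj₂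
  obtain ⟨y₃, hy₃, hp₃⟩ := hneighbour t₃ h₃ hadj₃
  have n₁₂ : pos y₁ ≠ pos y₂ := fun h => h₁₂ (hφ.eq_of_mem hy₁ (hG.1 h ▸ hy₂))
  have n₁₃ : pos y₁ ≠ pos y₃ := fun h => h₁₃ (hφ.eq_of_mem hy₁ (hG.1 h ▸ hy₃))
  have n₂₃ : pos y₂ ≠ pos y₃ := fun h => h₂₃ (hφ.eq_of_mem hy₂ (hG.1 h ▸ hy₃))
  omega

theorem IsApexOverPath.isPlanar [Finite α] (hG : IsApexOverPath G z pos) : IsPlanar G := by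
  refine ⟨hG.not_isMinor (by decide), hG.not_isMinor ?_⟩
  rintro (i | j)
  · exact ⟨.inl (i + 1), .inr 0, .inr 1, .inr 2, by simp⟩
  · exact ⟨.inr (j + 1), .inl 0, .inl 1, .inl 2, by simp⟩

end ApexOverPath

def chordedCycle (m c : ℕ) : SimpleGraph (Fin (c + m + 3)) :=
  cycleGraph _ ⊔ fromEdgeSet (range fun k : Fin c => s(0, ⟨k + 2, by omega⟩))

theorem isBiconnected_chordedCycle (m c : ℕ) : IsBiconnected (chordedCycle m c) :=
  (isBiconnected_cycleGraph (c + m + 1)).mono le_sup_left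

theorem chordedCycle_adj_val {m c : ℕ} {u w : Fin (c + m + 3)} (hu : u ≠ 0) (hw : w ≠ 0)
    (h : (chordedCycle m c).Adj u w) : u.val + 1 = w.val ∨ w.val + 1 = u.val := by
  have hu' : u.val ≠ 0 := Fin.val_ne_zero_iff.mpr hu
  have hw' : w.val ≠ 0 := Fin.val_ne_zero_iff.mpr hw
  rcases h with h | ⟨⟨k, hk⟩, -⟩
  · rcases cycleGraph_adj.mp h with h | h <;> have := Fin.val_sub_eq_one h <;> omega
  · rcases Sym2.eq_iff.mp hk with ⟨rfl, -⟩ | ⟨rfl, -⟩ <;> contradiction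

theorem isPlanar_chordedCycle (m c : ℕ) : IsPlanar (chordedCycle m c) :=
  IsApexOverPath.isPlanar (z := 0) ⟨Fin.val_injective, fun _ _ => chordedCycle_adj_val⟩

theorem chordedCycle_edgeSet_ncard (m c : ℕ) :
    (chordedCycle m c).edgeSet.ncard = c + m + 3 + c := by
  set chord : Fin c → Sym2 (Fin (c + m + 3)) := fun k => s(0, ⟨k + 2, by omega⟩)
  set chords := range chord
  have hdiag : Disjoint chords Sym2.diagSet := by
    rw [Set.disjoint_left]
    rintro _ ⟨k, rfl⟩ h
    simpa [Fin.ext_iff] using Sym2.mk_isDiag_iff.mp h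
  have hcycle : Disjoint (cycleGraph (c + m + 3)).edgeSet chords := by
    rw [Set.disjoint_right]
    rintro _ ⟨k, rfl⟩ h
    have := k.isLt
    rcases cycleGraph_adj.mp h with h | h <;> have := Fin.val_sub_eq_one h <;> simp only [Fin.val_zero] at this <;> omega
  have hinj : Function.Injective chord :=
    fun k l h => Fin.ext (by simpa using Sym2.congr_right.mp h)
  rw [chordedCycle, edgeSet_sup]
  change ((cycleGraph _).edgeSet ∪ (fromEdgeSet chords).edgeSet).ncard = _
  rw [edgeSet_fromEdgeSet, sdiff_eq_left.mpr hdiag, ncard_union_eq hcycle,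
    cycleGraph_edgeSet_ncard, ncard_range_of_injective hinj, Nat.card_fin]

/-- there is a constant `C` such that for every `n ≥ 1` there exist
`n` biconnected planar graphs, each on at most `C·n` vertices, that are pairwise
incomparable under the minor relation. -/
theorem stmt14 : ∃ C : ℕ, ∀ n : ℕ, 1 ≤ n →
    ∃ (m : Fin n → ℕ) (B : ∀ i, SimpleGraph (Fin (m i))),
      (∀ i, m i ≤ C * n) ∧
      (∀ i, IsBiconnected (B i)) ∧
      (∀ i, IsPlanar (B i)) ∧
      (∀ i j, i ≠ j → ¬ IsMinor (B i) (B j)) := by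
  refine ⟨5, fun n _ => ⟨fun i => 2 * (n - i) + 3 * i + 3,
    fun i => chordedCycle (3 * i) (2 * (n - i)), fun i => by dsimp only; omega,
    fun i => isBiconnected_chordedCycle _ _, fun i => isPlanar_chordedCycle _ _, ?_⟩⟩
  intro i j hij hminor
  rcases lt_or_gt_of_ne (Fin.val_ne_of_ne hij) with hlt | hgt
  · have hedges := hminor.edgeSet_ncard_le
    rw [chordedCycle_edgeSet_ncard, chordedCycle_edgeSet_ncard] at hedges
    omega
  · have hverts := hminor.card_le
    simp only [Nat.card_fin] at hverts
    omega
end
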